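/- arXiv:math/0304409 — 9 statements merged into one kernel-verified Lean document; each statement's English description precedes it below -/
import Mathlib

section
/- Let ℓ ≥ 1 be an integer, a = 2π/(2ℓ+1), and for j = -ℓ,…,ℓ let p_j be the polynomial in ℂ[x₁,x₂,x₃] given by p_j = (x₁ + i·sin(j·a)·x₂ + i·cos(j·a)·x₃)^ℓ. Then the family (p_j)_{j=-ℓ..ℓ} of 2ℓ+1 polynomials is linearly independent over ℂ. -/
/-!
The vectors `v_j = (1, i sin ja, i cos ja)` lie on the conic `x₁² + x₂² + x₃² = 0`, which is
parametrized by `γ(s) = (2s, 1 - s², -i(1 + s²))`. Each line `⟨v_j, x⟩ = 0` is tangent to the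
conic, so the substitution `x = γ(s)` turns `⟨v_j, x⟩` into `z̄_j (s + z_j)²` with `z_j = e^{ija}`,
and hence `p_j` into `z̄_j^ℓ (s + z_j)^{2ℓ}`. The `z_j`, `|j| ≤ ℓ`, are distinct `(2ℓ+1)`-th roots
of unity, and `2ℓ + 1` powers `(s + z_j)^{2ℓ}` with distinct `z_j` are linearly independent by
Vandermonde, because the coefficient of `s^{2ℓ-m}` in `(s + z)^{2ℓ}` is `binom(2ℓ, m) z^m`.
-/

open MvPolynomial

/-- The null-vector polynomial `p_j = (x₁ + i sin(j a) x₂ + i cos(j a) x₃)^ℓ`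
with `a = 2π/(2ℓ+1)`. -/
noncomputable def nullPoly (ℓ : ℕ) (j : ℤ) : MvPolynomial (Fin 3) ℂ :=
  (X 0
    + C (Complex.I * (Real.sin ((j : ℝ) * (2 * Real.pi / (2 * ℓ + 1))) : ℂ)) * X 1
    + C (Complex.I * (Real.cos ((j : ℝ) * (2 * Real.pi / (2 * ℓ + 1))) : ℂ)) * X 2) ^ ℓ

theorem eq_zero_of_forall_sum_mul_pow_eq_zero {R ι : Type*} [CommRing R] [IsDomain R]
    [Fintype ι] {t g : ι → R} (ht : Function.Injective t)
    (h : ∀ m < Fintype.card ι, ∑ i, g i * t i ^ m = 0) : g = 0 := by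
  let e := Fintype.equivFin ι
  have hv : g ∘ e.symm = 0 :=
    Matrix.eq_zero_of_forall_pow_sum_mul_pow_eq_zero (ht.comp e.symm.injective) fun m => by
      simpa only [Function.comp_apply, e.symm.sum_comp (fun i => g i * t i ^ (m : ℕ))]
        using h m m.2
  funext i
  simpa using congrFun hv (e i)

namespace Polynomial

theorem linearIndependent_X_add_C_pow {R ι : Type*} [CommRing R] [IsDomain R] [CharZero R]
    [Fintype ι] {t : ι → R} (ht : Function.Injective t) {n : ℕ}
    (hn : Fintype.card ι ≤ n + 1) :
    LinearIndependent R fun i => (X + C (t i)) ^ n := by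
  rw [Fintype.linearIndependent_iff]
  intro g hg
  refine congrFun (eq_zero_of_forall_sum_mul_pow_eq_zero ht fun m hm => ?_)
  have hcoeff := congrArg (coeff · (n - m)) hg
  simp only [finsetSum_coeff, coeff_smul, coeff_X_add_C_pow, Nat.sub_sub_self (by omega : m ≤ n),
    smul_eq_mul, coeff_zero, ← mul_assoc, ← Finset.sum_mul] at hcoeff
  exact (mul_eq_zero.mp hcoeff).resolve_right (by exact_mod_cast (Nat.choose_pos (by omega)).ne')

end Polynomial

theorem IsPrimitiveRoot.zpow_injOn_Ico {G₀ : Type*} [CommGroupWithZero G₀] {ζ : G₀} {k : ℕ}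
    (h : IsPrimitiveRoot ζ k) (a : ℤ) : Set.InjOn (ζ ^ · : ℤ → G₀) (Set.Ico a (a + k)) := by
  intro i hi j hj hij
  have hζ : ζ ≠ 0 := h.ne_zero (by rintro rfl; simp at hi)
  have hdvd : (k : ℤ) ∣ i - j := by
    rw [← h.zpow_eq_one_iff_dvd, zpow_sub₀ hζ, div_eq_one_iff_eq (zpow_ne_zero _ hζ)]
    exact hij
  have := Int.eq_zero_of_abs_lt_dvd hdvd (by simp only [Set.mem_Ico] at hi hj; rw [abs_lt]; omega)
  omega

section

open Complex

theorem exp_mul_I_zpow (x : ℝ) (k : ℤ) :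
    exp (x * I) ^ k = (Real.cos (k * x) : ℂ) + (Real.sin (k * x) : ℂ) * I := by
  rw [← exp_int_mul, ← mul_assoc, exp_mul_I, ← ofReal_intCast, ← ofReal_mul, ← ofReal_cos,
    ← ofReal_sin]

noncomputable def conicParam : MvPolynomial (Fin 3) ℂ →ₐ[ℂ] Polynomial ℂ :=
  aeval ![2 * Polynomial.X, 1 - Polynomial.X ^ 2, -Polynomial.C I * (1 + Polynomial.X ^ 2)]

theorem conicParam_linearForm {c s : ℂ} (h : c ^ 2 + s ^ 2 = 1) :
    conicParam (X 0 + C (I * s) * X 1 + C (I * c) * X 2)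
      = Polynomial.C (c - s * I) * (Polynomial.X + Polynomial.C (c + s * I)) ^ 2 := by
  simp only [conicParam, map_add, map_mul, aeval_X, aeval_C, Matrix.cons_val_zero,
    Matrix.cons_val_one, Matrix.cons_val_two, Matrix.head_cons, Matrix.tail_cons,
    Polynomial.algebraMap_eq]
  have hI : (Polynomial.C I) ^ 2 = -1 := by rw [← map_pow, I_sq, map_neg, map_one]
  have hcs : Polynomial.C c ^ 2 + Polynomial.C s ^ 2 = 1 := by
    rw [← map_pow, ← map_pow, ← map_add, h, map_one]
  simp only [map_mul, map_sub]
  linear_combination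
    (2 * Polynomial.C s ^ 2 * Polynomial.X - Polynomial.C c * (1 + Polynomial.X ^ 2)
      + Polynomial.C s ^ 2 * (Polynomial.C c + Polynomial.C s * Polynomial.C I)) * hI
    - (2 * Polynomial.X + Polynomial.C c + Polynomial.C s * Polynomial.C I) * hcs

theorem conicParam_nullPoly (ℓ : ℕ) (j : ℤ) :
    conicParam (nullPoly ℓ j) = Polynomial.C (exp (↑(2 * Real.pi / (2 * ℓ + 1)) * I) ^ (-j * ℓ))
      * (Polynomial.X + Polynomial.C (exp (↑(2 * Real.pi / (2 * ℓ + 1)) * I) ^ j)) ^ (2 * ℓ) := by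
  set a := 2 * Real.pi / (2 * ℓ + 1)
  have hcis_neg : exp (a * I) ^ (-j) = (Real.cos (j * a) : ℂ) - (Real.sin (j * a) : ℂ) * I := by
    rw [exp_mul_I_zpow, Int.cast_neg, neg_mul, Real.cos_neg, Real.sin_neg, ofReal_neg, neg_mul,
      ← sub_eq_add_neg]
  have hpyth : (Real.cos (j * a) : ℂ) ^ 2 + (Real.sin (j * a) : ℂ) ^ 2 = 1 := by
    exact_mod_cast Real.cos_sq_add_sin_sq (j * a)
  rw [nullPoly, map_pow, conicParam_linearForm hpyth, ← exp_mul_I_zpow, ← hcis_neg, mul_pow,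
    ← map_pow, ← zpow_natCast, ← zpow_mul, ← pow_mul, mul_comm 2]

theorem linearIndependent_nullPoly_general (ℓ : ℕ) :
    LinearIndependent ℂ (fun j : (Finset.Icc (-(ℓ : ℤ)) ℓ) => nullPoly ℓ j.1) := by
  set ω := exp (↑(2 * Real.pi / (2 * ℓ + 1)) * I)
  have hω : IsPrimitiveRoot ω (2 * ℓ + 1) := by
    convert isPrimitiveRoot_exp (2 * ℓ + 1) (by omega) using 2
    push_cast
    ring
  have hinj : Function.Injective fun j : Finset.Icc (-(ℓ : ℤ)) ℓ => ω ^ (j : ℤ) := by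
    have hIco (j : Finset.Icc (-(ℓ : ℤ)) ℓ) : (j : ℤ) ∈ Set.Ico (-(ℓ : ℤ)) (-ℓ + ↑(2 * ℓ + 1)) := by
      simp only [Set.mem_Ico]; have := Finset.mem_Icc.mp j.2; omega
    exact fun i j hij => Subtype.ext (hω.zpow_injOn_Ico (-(ℓ : ℤ)) (hIco i) (hIco j) hij)
  have hcard : Fintype.card (Finset.Icc (-(ℓ : ℤ)) ℓ) ≤ 2 * ℓ + 1 := by
    simp only [Fintype.card_coe, Int.card_Icc]; omega
  have hunit (j : Finset.Icc (-(ℓ : ℤ)) ℓ) : ω ^ (-(j : ℤ) * ℓ) ≠ 0 :=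
    zpow_ne_zero _ (hω.ne_zero (by omega))
  have hmap : ⇑conicParam.toLinearMap ∘ (fun j : Finset.Icc (-(ℓ : ℤ)) ℓ => nullPoly ℓ j.1)
      = (fun j => Units.mk0 _ (hunit j)) • fun j : Finset.Icc (-(ℓ : ℤ)) ℓ =>
          (Polynomial.X + Polynomial.C (ω ^ (j : ℤ))) ^ (2 * ℓ) := by
    funext j
    simp only [Function.comp_apply, AlgHom.toLinearMap_apply, conicParam_nullPoly,
      Pi.smul_apply', Units.smul_def, Units.val_mk0, Polynomial.smul_eq_C_mul]
    rfl
  refine LinearIndependent.of_comp conicParam.toLinearMap ?_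
  rw [hmap]
  exact (Polynomial.linearIndependent_X_add_C_pow hinj hcard).units_smul _

theorem linearIndependent_nullPoly (ℓ : ℕ) (hℓ : 1 ≤ ℓ) :
    LinearIndependent ℂ (fun j : (Finset.Icc (-(ℓ : ℤ)) ℓ) => nullPoly ℓ j.1) :=
  linearIndependent_nullPoly_general ℓ

end
end

section
/- Let ℓ ≥ 1 be an integer and a = 2π/(2ℓ+1). For every X ∈ ℝ³ and every integer m with |m| ≤ ℓ, the finite sum (1/(2ℓ+1))·Σ_{j=-ℓ}^{ℓ} e^{-i m j a}·(X·N(j·a))^ℓ equals the integral (1/(2π))·∫₀^{2π} e^{-i m α}·(X·N(α))^ℓ dα. -/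
open Real

/-- The null vector `N(α) = (1, i sin α, i cos α) ∈ ℂ³`. -/
noncomputable def Nvec (α : ℝ) : Fin 3 → ℂ :=
  ![1, Complex.I * Real.sin α, Complex.I * Real.cos α]

/-- The bilinear (non-Hermitian) pairing of `X ∈ ℝ³` with `Z ∈ ℂ³`. -/
noncomputable def dotRC (X : Fin 3 → ℝ) (Z : Fin 3 → ℂ) : ℂ :=
  ∑ i, (X i : ℂ) * Z i

lemma integral_exp_int (n : ℤ) :
    (∫ α in (0:ℝ)..(2*π), Complex.exp (Complex.I * n * α))
      = if n = 0 then (2*π : ℂ) else 0 := by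
  by_cases h : n = 0
  · simp [h]
  · have hc : (Complex.I * n : ℂ) ≠ 0 := by
      simp [Complex.I_ne_zero, h]
    rw [integral_exp_mul_complex hc]
    have h1 : Complex.exp (Complex.I * n * ((2*π : ℝ) : ℂ)) = 1 := by
      rw [← Complex.exp_int_mul_two_pi_mul_I n]
      push_cast; ring_nf
    rw [h1]
    simp [h]

lemma sum_exp_int (ℓ : ℕ) (n : ℤ) :
    ∑ j ∈ Finset.Icc (-(ℓ:ℤ)) (ℓ:ℤ),
        Complex.exp (Complex.I * n * j * ((2*π/(2*ℓ+1) : ℝ) : ℂ))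
      = if (2*(ℓ:ℤ)+1) ∣ n then (2*(ℓ:ℕ)+1 : ℂ) else 0 := by
  set a : ℂ := ((2*π/(2*ℓ+1) : ℝ) : ℂ) with ha_def
  have hdenC : (2*(ℓ:ℂ)+1) ≠ 0 := by
    have : (0:ℝ) < 2*(ℓ:ℝ)+1 := by positivity
    exact_mod_cast this.ne'
  have ha : (2*(ℓ:ℂ)+1) * a = 2*π := by
    rw [ha_def]; push_cast
    field_simp
  set ζ := Complex.exp (Complex.I * n * a) with hζ_def
  have hterm : ∀ j : ℤ, Complex.exp (Complex.I * n * j * a) = ζ ^ j := by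
    intro j
    rw [hζ_def, ← Complex.exp_int_mul]
    ring_nf
  have hζpow : ζ ^ (2*ℓ+1 : ℕ) = 1 := by
    rw [hζ_def, ← Complex.exp_nat_mul]
    have h : (2*ℓ+1 : ℕ) * (Complex.I * n * a) = n * (2*π*Complex.I) := by
      push_cast
      calc ((2*(ℓ:ℂ)+1)) * (Complex.I * n * a) = Complex.I * n * ((2*(ℓ:ℂ)+1) * a) := by ring
        _ = Complex.I * n * (2*π) := by rw [ha]
        _ = n * (2*π*Complex.I) := by ring
    rw [h, Complex.exp_int_mul_two_pi_mul_I]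
  simp only [hterm]
  by_cases hdvd : (2*(ℓ:ℤ)+1) ∣ n
  · rw [if_pos hdvd]
    obtain ⟨q, hq⟩ := hdvd
    have hζ1 : ζ = 1 := by
      have h : Complex.I * n * a = q * (2*π*Complex.I) := by
        rw [hq]; push_cast
        calc Complex.I * ((2*(ℓ:ℂ)+1) * q) * a = q * Complex.I * ((2*(ℓ:ℂ)+1)*a) := by ring
          _ = q * Complex.I * (2*π) := by rw [ha]
          _ = q * (2*π*Complex.I) := by ring
      rw [hζ_def, h, Complex.exp_int_mul_two_pi_mul_I]
    simp only [hζ1, one_zpow, Finset.sum_const, nsmul_eq_mul, mul_one, Int.card_Icc]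
    have : ((ℓ:ℤ) + 1 - -(ℓ:ℤ)).toNat = 2*ℓ+1 := by omega
    rw [this]; push_cast; ring
  · rw [if_neg hdvd]
    have hζne1 : ζ ≠ 1 := by
      intro h1
      rw [hζ_def, Complex.exp_eq_one_iff] at h1
      obtain ⟨k, hk⟩ := h1
      apply hdvd ⟨k, ?_⟩
      have h2 : Complex.I*(2*(π:ℂ))*(n:ℂ) = Complex.I*(2*(π:ℂ))*(((2*(ℓ:ℂ)+1))*k) := by
        have e1 : Complex.I*(2*(π:ℂ))*(n:ℂ) = (2*(ℓ:ℂ)+1) * (Complex.I*↑n*a) := by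
          rw [show (2*(ℓ:ℂ)+1) * (Complex.I*(n:ℂ)*a) = Complex.I*(n:ℂ)*((2*(ℓ:ℂ)+1)*a) from by ring, ha]
          ring
        rw [e1, hk]; ring
      have hIπ : Complex.I*(2*(π:ℂ)) ≠ 0 := by
        simp [Complex.I_ne_zero, Real.pi_ne_zero]
      have h3 := mul_left_cancel₀ hIπ h2
      exact_mod_cast h3
    have hζ0 : ζ ≠ 0 := Complex.exp_ne_zero _
    have hre : ∑ j ∈ Finset.Icc (-(ℓ:ℤ)) (ℓ:ℤ), ζ ^ j
        = ζ ^ (-(ℓ:ℤ)) * ∑ k ∈ Finset.range (2*ℓ+1), ζ ^ k := by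
      rw [Finset.mul_sum]
      refine Finset.sum_nbij' (fun j => (j + ℓ).toNat) (fun k => (k:ℤ) - ℓ) ?_ ?_ ?_ ?_ ?_
      · intro j hj; simp only [Finset.mem_Icc] at hj; simp only [Finset.mem_range]; omega
      · intro k hk; simp only [Finset.mem_range] at hk; simp only [Finset.mem_Icc]; omega
      · intro j hj; simp only [Finset.mem_Icc] at hj; omega
      · intro k hk; simp only [Finset.mem_range] at hk; omega
      · intro j hj
        simp only [Finset.mem_Icc] at hj
        rw [← zpow_natCast ζ, ← zpow_add₀ hζ0]
        congr 1
        omega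
    rw [hre, geom_sum_eq hζne1, hζpow]
    simp

lemma dot_mul_exp (X : Fin 3 → ℝ) (α : ℝ) :
    dotRC X (Nvec α) * Complex.exp (Complex.I * α)
      = ((-(X 1 : ℂ) + Complex.I * X 2)/2) + (X 0 : ℂ) * Complex.exp (Complex.I * α)
        + (((X 1 : ℂ) + Complex.I * X 2)/2) * Complex.exp (Complex.I * α)^2 := by
  have hE : Complex.exp (Complex.I * α) * Complex.exp (-(Complex.I * α)) = 1 := by
    rw [← Complex.exp_add]; simp
  simp only [dotRC, Nvec, Fin.sum_univ_three, Matrix.cons_val_zero, Matrix.cons_val_one,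
    Matrix.head_cons, Matrix.cons_val_two, Matrix.tail_cons, Complex.ofReal_sin,
    Complex.ofReal_cos, Complex.sin, Complex.cos]
  rw [show (-(α:ℂ)*Complex.I) = -(Complex.I*α) from by ring,
      show ((α:ℂ)*Complex.I) = Complex.I*α from by ring]
  linear_combination ((-(X 1 : ℂ) + Complex.I * X 2)/2) * hE
    + ((X 1 : ℂ) * (Complex.exp (-(Complex.I*(α:ℂ)))*Complex.exp (Complex.I*(α:ℂ))
        - Complex.exp (Complex.I*(α:ℂ))^2)/2) * Complex.I_sq

noncomputable def Qpoly (X : Fin 3 → ℝ) (ℓ : ℕ) : Polynomial ℂ :=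
  (Polynomial.C ((-(X 1:ℂ) + Complex.I * X 2)/2) + Polynomial.C (X 0:ℂ) * Polynomial.X
    + Polynomial.C (((X 1:ℂ) + Complex.I * X 2)/2) * Polynomial.X^2)^ℓ

lemma Qpoly_deg (X : Fin 3 → ℝ) (ℓ : ℕ) : (Qpoly X ℓ).natDegree ≤ 2*ℓ := by
  unfold Qpoly
  rw [mul_comm 2 ℓ]
  compute_degree

lemma dot_pow (X : Fin 3 → ℝ) (ℓ : ℕ) (α : ℝ) :
    (dotRC X (Nvec α))^ℓ * Complex.exp (Complex.I*α)^ℓ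
      = (Qpoly X ℓ).eval (Complex.exp (Complex.I*α)) := by
  rw [Qpoly, Polynomial.eval_pow, ← mul_pow, dot_mul_exp]
  simp

lemma expand (X : Fin 3 → ℝ) (ℓ : ℕ) (m : ℤ) (α : ℝ) :
    Complex.exp (-Complex.I * m * α) * (dotRC X (Nvec α)) ^ ℓ
      = ∑ k ∈ Finset.range (2*ℓ+1), (Qpoly X ℓ).coeff k *
          Complex.exp (Complex.I * (((k:ℤ) - ℓ - m : ℤ) : ℂ) * α) := by
  have hne : Complex.exp (Complex.I*ℓ*α) * Complex.exp (Complex.I*m*α) ≠ 0 :=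
    mul_ne_zero (Complex.exp_ne_zero _) (Complex.exp_ne_zero _)
  apply mul_right_cancel₀ hne
  have h1 := dot_pow X ℓ α
  rw [Polynomial.eval_eq_sum_range' (Nat.lt_succ_of_le (Qpoly_deg X ℓ))] at h1
  calc Complex.exp (-Complex.I * m * α) * (dotRC X (Nvec α)) ^ ℓ
        * (Complex.exp (Complex.I*ℓ*α) * Complex.exp (Complex.I*m*α))
      = (dotRC X (Nvec α)) ^ ℓ * Complex.exp (Complex.I*α)^ℓ
        * (Complex.exp (-Complex.I * m * α) * Complex.exp (Complex.I*m*α)) := by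
        rw [← Complex.exp_nat_mul]
        ring_nf
    _ = ∑ k ∈ Finset.range (2*ℓ+1), (Qpoly X ℓ).coeff k * Complex.exp (Complex.I*α)^k := by
        rw [h1, ← Complex.exp_add]
        norm_num [Nat.succ_eq_add_one]
    _ = (∑ k ∈ Finset.range (2*ℓ+1), (Qpoly X ℓ).coeff k *
          Complex.exp (Complex.I * (((k:ℤ) - ℓ - m : ℤ) : ℂ) * α))
        * (Complex.exp (Complex.I*ℓ*α) * Complex.exp (Complex.I*m*α)) := by
        rw [Finset.sum_mul]
        refine Finset.sum_congr rfl fun k _ => ?_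
        rw [mul_assoc, ← Complex.exp_nat_mul, ← Complex.exp_add, ← Complex.exp_add]
        congr 1
        push_cast
        ring

/-- For `|m| ≤ ℓ`, the discrete average of `e^{-imα} (X·N(α))^ℓ` over the `2ℓ+1`
roots-of-unity angles `j·a`, `a = 2π/(2ℓ+1)`, equals its average over the circle. -/
theorem discrete_average_eq_integral (ℓ : ℕ) (hℓ : 1 ≤ ℓ) (m : ℤ) (hm : |m| ≤ (ℓ : ℤ))
    (X : Fin 3 → ℝ) :
    (1 / (2 * ℓ + 1) : ℂ) *
        ∑ j ∈ Finset.Icc (-(ℓ : ℤ)) ℓ,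
          Complex.exp (-Complex.I * m * j * ((2 * π / (2 * ℓ + 1) : ℝ) : ℂ)) *
            (dotRC X (Nvec ((j : ℝ) * (2 * π / (2 * ℓ + 1))))) ^ ℓ
      = (1 / (2 * ↑π) : ℂ) *
          ∫ α in (0 : ℝ)..(2 * π),
            Complex.exp (-Complex.I * m * α) * (dotRC X (Nvec α)) ^ ℓ := by
  have hm0 : 0 ≤ (ℓ:ℤ) + m := by
    rcases abs_le.mp hm with ⟨h1, _⟩; omega
  set k₀ : ℕ := ((ℓ:ℤ) + m).toNat with hk₀
  have hk₀ℤ : (k₀ : ℤ) = (ℓ:ℤ) + m := Int.toNat_of_nonneg hm0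
  have hk₀mem : k₀ ∈ Finset.range (2*ℓ+1) := by
    simp only [Finset.mem_range]
    rcases abs_le.mp hm with ⟨_, h2⟩; omega
  set a : ℝ := 2 * π / (2 * ℓ + 1) with ha_def
  -- Discrete side
  have hdisc : ∑ j ∈ Finset.Icc (-(ℓ : ℤ)) ℓ,
      Complex.exp (-Complex.I * m * j * (a : ℂ)) * (dotRC X (Nvec ((j : ℝ) * a))) ^ ℓ
      = (Qpoly X ℓ).coeff k₀ * (2*(ℓ:ℕ)+1 : ℂ) := by
    have step1 : ∀ j ∈ Finset.Icc (-(ℓ : ℤ)) ℓ,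
        Complex.exp (-Complex.I * m * j * (a : ℂ)) * (dotRC X (Nvec ((j : ℝ) * a))) ^ ℓ
        = ∑ k ∈ Finset.range (2*ℓ+1), (Qpoly X ℓ).coeff k *
            Complex.exp (Complex.I * (((k:ℤ) - ℓ - m : ℤ) : ℂ) * (j:ℂ) * (a:ℂ)) := by
      intro j _
      have := expand X ℓ m ((j:ℝ) * a)
      rw [show (-Complex.I * m * (((j:ℝ)*a : ℝ):ℂ)) = -Complex.I * m * j * (a:ℂ) from by
        push_cast; ring] at this
      rw [this]
      refine Finset.sum_congr rfl fun k _ => ?_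
      congr 1
      push_cast
      ring
    rw [Finset.sum_congr rfl step1, Finset.sum_comm]
    have step2 : ∀ k ∈ Finset.range (2*ℓ+1),
        ∑ j ∈ Finset.Icc (-(ℓ : ℤ)) ℓ, (Qpoly X ℓ).coeff k *
            Complex.exp (Complex.I * (((k:ℤ) - ℓ - m : ℤ) : ℂ) * (j:ℂ) * (a:ℂ))
        = (Qpoly X ℓ).coeff k *
            (if (2*(ℓ:ℤ)+1) ∣ ((k:ℤ) - ℓ - m) then (2*(ℓ:ℕ)+1 : ℂ) else 0) := by
      intro k _
      rw [← Finset.mul_sum, ha_def, sum_exp_int ℓ ((k:ℤ) - ℓ - m)]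
    rw [Finset.sum_congr rfl step2]
    rw [Finset.sum_eq_single_of_mem k₀ hk₀mem]
    · rw [if_pos (by rw [hk₀ℤ]; simp)]
    · intro k hk hne
      rw [if_neg, mul_zero]
      intro hdvd
      simp only [Finset.mem_range] at hk
      rcases abs_le.mp hm with ⟨h1, h2⟩
      have habs : |(k:ℤ) - ℓ - m| < 2*(ℓ:ℤ)+1 := by
        rw [abs_lt]; omega
      have h0 : (k:ℤ) - ℓ - m = 0 := Int.eq_zero_of_abs_lt_dvd hdvd habs
      apply hne
      omega
  -- Integral side
  have hcont : ∀ n : ℤ, Continuous fun α : ℝ => Complex.exp (Complex.I * (n:ℂ) * (α:ℂ)) := by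
    intro n
    exact Complex.continuous_exp.comp (by continuity)
  have hint : (∫ α in (0:ℝ)..(2*π),
      Complex.exp (-Complex.I * m * α) * (dotRC X (Nvec α)) ^ ℓ)
      = (Qpoly X ℓ).coeff k₀ * (2*(π:ℂ)) := by
    rw [intervalIntegral.integral_congr (g := fun α : ℝ =>
      ∑ k ∈ Finset.range (2*ℓ+1), (Qpoly X ℓ).coeff k *
        Complex.exp (Complex.I * (((k:ℤ) - ℓ - m : ℤ) : ℂ) * (α:ℂ)))
      (fun α _ => expand X ℓ m α)]
    rw [intervalIntegral.integral_finset_sum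
      (f := fun k (α:ℝ) => (Qpoly X ℓ).coeff k *
        Complex.exp (Complex.I * (((k:ℤ) - ℓ - m : ℤ) : ℂ) * (α:ℂ)))
      (fun k _ =>
      ((continuous_const.mul (hcont ((k:ℤ) - ℓ - m))).intervalIntegrable _ _))]
    have : ∀ k ∈ Finset.range (2*ℓ+1),
        (∫ α in (0:ℝ)..(2*π), (Qpoly X ℓ).coeff k *
          Complex.exp (Complex.I * (((k:ℤ) - ℓ - m : ℤ) : ℂ) * (α:ℂ)))
        = (Qpoly X ℓ).coeff k * (if ((k:ℤ) - ℓ - m) = 0 then (2*(π:ℂ)) else 0) := by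
      intro k _
      rw [intervalIntegral.integral_const_mul, integral_exp_int]
    rw [Finset.sum_congr rfl this, Finset.sum_eq_single_of_mem k₀ hk₀mem]
    · rw [if_pos (by omega)]
    · intro k hk hne
      rw [if_neg, mul_zero]
      omega
  rw [hdisc, hint]
  have hden : (2*(ℓ:ℂ)+1) ≠ 0 := by
    have : (0:ℝ) < 2*(ℓ:ℝ)+1 := by positivity
    exact_mod_cast this.ne'
  have hπ : (π:ℂ) ≠ 0 := by exact_mod_cast Real.pi_ne_zero
  field_simp
end

section
/- Let ℓ ≥ 1 be an integer, a = 2π/(2ℓ+1), and let m be an integer with |m| ≤ ℓ. Then for all real θ, φ: ∫₀^{2π} e^{-i m α}·[cos θ + i·sin θ·sin(φ + α)]^ℓ dα = (2π/(2ℓ+1))·Σ_{j=-ℓ}^{ℓ} e^{-i m j a}·[cos θ + i·sin θ·sin(φ + j·a)]^ℓ. (This is a finite version of the classical integral representation of the spherical harmonics Y_{ℓm}.) -/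
/-!
The integrand is a trigonometric polynomial whose frequencies `k` satisfy `|k| ≤ 2ℓ`:
`e^{-imα}` has frequency `-m` with `|m| ≤ ℓ`, and the bracket has frequencies `-1, 0, 1`.
On such polynomials the rectangle rule with `N = 2ℓ + 1` equally spaced nodes is exact.
Indeed, for `0 < |k| < N` the mode `e^{ikα}` has integral `0` over a period, and its values at
the nodes `j · 2π/N` run through the powers of the `N`-th root of unity `e^{2πik/N} ≠ 1`, whose
sum over any `N` consecutive exponents vanishes.
-/

open Real

lemma sum_zpow_Ico_eq_zero {K : Type*} [DivisionRing K] {ω : K} {N : ℕ} (hN : ω ^ N = 1)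
    (hω : ω ≠ 1) (s : ℤ) : ∑ j ∈ Finset.Ico s (s + N), ω ^ j = 0 := by
  rcases N.eq_zero_or_pos with rfl | hpos
  · simp
  have hω0 : ω ≠ 0 := fun h => by simp [h, hpos.ne'] at hN
  rw [Int.Ico_eq_finset_map, Finset.sum_map]
  simp only [add_sub_cancel_left, Int.toNat_natCast, Function.Embedding.trans_apply,
    Nat.castEmbedding_apply, addLeftEmbedding_apply, zpow_add₀ hω0, zpow_natCast,
    ← Finset.mul_sum, geom_sum_eq hω, hN, sub_self, zero_div, mul_zero]

noncomputable def fourierMode (k : ℤ) (α : ℝ) : ℂ := Complex.exp (k * α * Complex.I)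

lemma fourierMode_zero : fourierMode 0 = 1 := by
  funext α
  simp [fourierMode]

lemma fourierMode_add (k l : ℤ) : fourierMode (k + l) = fourierMode k * fourierMode l := by
  funext α
  simp only [fourierMode, Pi.mul_apply, ← Complex.exp_add]
  push_cast
  ring_nf

lemma continuous_fourierMode (k : ℤ) : Continuous (fourierMode k) := by
  unfold fourierMode
  fun_prop

lemma integral_fourierMode {k : ℤ} (hk : k ≠ 0) :
    ∫ α in (0 : ℝ)..2 * π, fourierMode k α = 0 := by
  have hc : (k * Complex.I : ℂ) ≠ 0 := mul_ne_zero (Int.cast_ne_zero.mpr hk) Complex.I_ne_zero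
  simp_rw [fourierMode, mul_right_comm _ _ Complex.I]
  rw [integral_exp_mul_complex hc]
  push_cast
  rw [show (k : ℂ) * Complex.I * (2 * π) = k * (2 * π * Complex.I) by ring,
    Complex.exp_int_mul_two_pi_mul_I]
  simp

lemma sum_fourierMode_Ico {N : ℕ} {k : ℤ} (hk : k ≠ 0) (hkN : |k| < N) (s : ℤ) :
    ∑ j ∈ Finset.Ico s (s + N), fourierMode k (j * (2 * π / N)) = 0 := by
  have hN : N ≠ 0 := by rintro rfl; simp at hkN; linarith [abs_nonneg k]
  have hζ := Complex.isPrimitiveRoot_exp N hN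
  set ζ := Complex.exp (2 * π * Complex.I / N)
  have hterm (j : ℤ) : fourierMode k (j * (2 * π / N)) = (ζ ^ k) ^ j := by
    rw [fourierMode, ← zpow_mul, ← Complex.exp_int_mul]
    push_cast
    ring_nf
  simp_rw [hterm]
  refine sum_zpow_Ico_eq_zero ?_ ?_ s
  · rw [← zpow_natCast, ← zpow_mul, mul_comm, zpow_mul, zpow_natCast, hζ.pow_eq_one, one_zpow]
  · rw [Ne, hζ.zpow_eq_one_iff_dvd]
    exact fun hdvd => hk (Int.eq_zero_of_abs_lt_dvd hdvd hkN)

noncomputable def trigPolyDegreeLE (n : ℕ) : Submodule ℂ (ℝ → ℂ) :=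
  Submodule.span ℂ (fourierMode '' {k | |k| ≤ n})

lemma fourierMode_mem_trigPolyDegreeLE {n : ℕ} {k : ℤ} (hk : |k| ≤ n) :
    fourierMode k ∈ trigPolyDegreeLE n :=
  Submodule.subset_span ⟨k, hk, rfl⟩

lemma one_mem_trigPolyDegreeLE (n : ℕ) : (1 : ℝ → ℂ) ∈ trigPolyDegreeLE n :=
  fourierMode_zero ▸ fourierMode_mem_trigPolyDegreeLE (by simp)

lemma trigPolyDegreeLE_mul_le (n p : ℕ) :
    trigPolyDegreeLE n * trigPolyDegreeLE p ≤ trigPolyDegreeLE (n + p) := by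
  rw [trigPolyDegreeLE, trigPolyDegreeLE, Submodule.span_mul_span]
  refine Submodule.span_le.mpr ?_
  rintro _ ⟨_, ⟨k, hk, rfl⟩, _, ⟨l, hl, rfl⟩, rfl⟩
  show fourierMode k * fourierMode l ∈ _
  rw [← fourierMode_add]
  refine fourierMode_mem_trigPolyDegreeLE ((abs_add_le k l).trans ?_)
  push_cast
  exact add_le_add hk hl

lemma mul_mem_trigPolyDegreeLE {n p : ℕ} {f g : ℝ → ℂ} (hf : f ∈ trigPolyDegreeLE n)
    (hg : g ∈ trigPolyDegreeLE p) : f * g ∈ trigPolyDegreeLE (n + p) :=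
  trigPolyDegreeLE_mul_le n p (Submodule.mul_mem_mul hf hg)

lemma pow_mem_trigPolyDegreeLE {n : ℕ} {f : ℝ → ℂ} (hf : f ∈ trigPolyDegreeLE n) (k : ℕ) :
    f ^ k ∈ trigPolyDegreeLE (n * k) := by
  induction k with
  | zero => simpa using one_mem_trigPolyDegreeLE 0
  | succ k ih => simpa [pow_succ, mul_add] using mul_mem_trigPolyDegreeLE ih hf

lemma continuous_of_mem_trigPolyDegreeLE {n : ℕ} {f : ℝ → ℂ} (hf : f ∈ trigPolyDegreeLE n) :
    Continuous f := by
  induction hf using Submodule.span_induction with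
  | mem _ h => obtain ⟨k, -, rfl⟩ := h; exact continuous_fourierMode k
  | zero => exact continuous_const
  | add _ _ _ _ hf hg => exact hf.add hg
  | smul c _ _ hf => exact hf.const_smul c

lemma sin_add_mem_trigPolyDegreeLE (φ : ℝ) :
    (fun α : ℝ => (Real.sin (φ + α) : ℂ)) ∈ trigPolyDegreeLE 1 := by
  have h : (fun α : ℝ => (Real.sin (φ + α) : ℂ)) =
      (-Complex.I / 2 * Complex.exp (φ * Complex.I)) • fourierMode 1 -
        (-Complex.I / 2 * Complex.exp (-φ * Complex.I)) • fourierMode (-1) := by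
    funext α
    simp only [Complex.ofReal_sin, Complex.sin, fourierMode, Pi.sub_apply, Pi.smul_apply,
      smul_eq_mul, mul_assoc, ← Complex.exp_add]
    push_cast
    ring_nf
  rw [h]
  exact sub_mem (Submodule.smul_mem _ _ (fourierMode_mem_trigPolyDegreeLE (by simp)))
    (Submodule.smul_mem _ _ (fourierMode_mem_trigPolyDegreeLE (by simp)))

lemma integral_eq_sum_of_mem_trigPolyDegreeLE {n N : ℕ} (hnN : n < N) {f : ℝ → ℂ}
    (hf : f ∈ trigPolyDegreeLE n) (s : ℤ) :
    ∫ α in (0 : ℝ)..2 * π, f α =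
      ((2 * π / N : ℝ) : ℂ) * ∑ j ∈ Finset.Ico s (s + N), f (j * (2 * π / N)) := by
  induction hf using Submodule.span_induction with
  | mem _ h =>
    obtain ⟨k, hk, rfl⟩ := h
    rcases eq_or_ne k 0 with rfl | hk0
    · have hN : (N : ℂ) ≠ 0 := Nat.cast_ne_zero.mpr (Nat.zero_le n |>.trans_lt hnN).ne'
      simp only [fourierMode_zero, Pi.one_apply, intervalIntegral.integral_const, sub_zero,
        Complex.real_smul, mul_one, Finset.sum_const, Int.card_Ico, add_sub_cancel_left,
        Int.toNat_natCast, nsmul_eq_mul]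
      push_cast
      field_simp
    · have hkN : |k| < N := lt_of_le_of_lt hk (by exact_mod_cast hnN)
      rw [integral_fourierMode hk0, sum_fourierMode_Ico hk0 hkN, mul_zero]
  | zero => simp
  | add f g hf hg hf' hg' =>
    have hfi : IntervalIntegrable f MeasureTheory.volume 0 (2 * π) :=
      (continuous_of_mem_trigPolyDegreeLE hf).intervalIntegrable _ _
    have hgi : IntervalIntegrable g MeasureTheory.volume 0 (2 * π) :=
      (continuous_of_mem_trigPolyDegreeLE hg).intervalIntegrable _ _
    simp only [Pi.add_apply, intervalIntegral.integral_add hfi hgi, hf', hg',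
      Finset.sum_add_distrib, mul_add]
  | smul c f _ hf' =>
    simp only [Pi.smul_apply, smul_eq_mul, intervalIntegral.integral_const_mul, hf',
      ← Finset.mul_sum]
    ring

theorem integral_representation_finite_general (ℓ : ℕ) (m : ℤ) (hm : |m| ≤ (ℓ : ℤ))
    (θ φ : ℝ) :
    (∫ α in (0 : ℝ)..(2 * π),
        Complex.exp (-Complex.I * m * α) *
          ((Real.cos θ : ℂ) + Complex.I * (Real.sin θ : ℂ) * (Real.sin (φ + α) : ℂ)) ^ ℓ)
      = ((2 * π / (2 * ℓ + 1) : ℝ) : ℂ) *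
          ∑ j ∈ Finset.Icc (-(ℓ : ℤ)) ℓ,
            Complex.exp (-Complex.I * m * j * ((2 * π / (2 * ℓ + 1) : ℝ) : ℂ)) *
              ((Real.cos θ : ℂ) + Complex.I * (Real.sin θ : ℂ) *
                (Real.sin (φ + (j : ℝ) * (2 * π / (2 * ℓ + 1))) : ℂ)) ^ ℓ := by
  set b : ℝ → ℂ := fun α =>
    (Real.cos θ : ℂ) + Complex.I * (Real.sin θ : ℂ) * (Real.sin (φ + α) : ℂ)
  have hb : b ∈ trigPolyDegreeLE 1 := by
    have hb_eq : b = (Real.cos θ : ℂ) • 1 +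
        (Complex.I * Real.sin θ) • fun α => (Real.sin (φ + α) : ℂ) := by
      funext α
      simp [b]
    rw [hb_eq]
    exact add_mem (Submodule.smul_mem _ _ (one_mem_trigPolyDegreeLE 1))
      (Submodule.smul_mem _ _ (sin_add_mem_trigPolyDegreeLE φ))
  have hf : fourierMode (-m) * b ^ ℓ ∈ trigPolyDegreeLE (2 * ℓ) := by
    simpa [two_mul] using mul_mem_trigPolyDegreeLE
      (fourierMode_mem_trigPolyDegreeLE (by simpa using hm)) (pow_mem_trigPolyDegreeLE hb ℓ)
  have hwindow : Finset.Icc (-(ℓ : ℤ)) ℓ = Finset.Ico (-(ℓ : ℤ)) (-ℓ + (2 * ℓ + 1 : ℕ)) := by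
    ext; simp; omega
  have hquad := integral_eq_sum_of_mem_trigPolyDegreeLE (N := 2 * ℓ + 1) (by omega) hf (-ℓ)
  rw [hwindow]
  simp only [Pi.mul_apply, Pi.pow_apply, fourierMode, b] at hquad
  push_cast at hquad ⊢
  convert hquad using 4 <;> ring_nf

/-- The finite version of the classical integral representation of the spherical
harmonics: for `|m| ≤ ℓ` and `a = 2π/(2ℓ+1)`, the integral over the circle of
`e^{-imα} [cos θ + i sin θ sin(φ+α)]^ℓ` equals `2π/(2ℓ+1)` times the sum of the
integrand over the angles `j·a`, `j = -ℓ, …, ℓ`. -/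
theorem integral_representation_finite (ℓ : ℕ) (hℓ : 1 ≤ ℓ) (m : ℤ) (hm : |m| ≤ (ℓ : ℤ))
    (θ φ : ℝ) :
    (∫ α in (0 : ℝ)..(2 * π),
        Complex.exp (-Complex.I * m * α) *
          ((Real.cos θ : ℂ) + Complex.I * (Real.sin θ : ℂ) * (Real.sin (φ + α) : ℂ)) ^ ℓ)
      = ((2 * π / (2 * ℓ + 1) : ℝ) : ℂ) *
          ∑ j ∈ Finset.Icc (-(ℓ : ℤ)) ℓ,
            Complex.exp (-Complex.I * m * j * ((2 * π / (2 * ℓ + 1) : ℝ) : ℂ)) *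
              ((Real.cos θ : ℂ) + Complex.I * (Real.sin θ : ℂ) *
                (Real.sin (φ + (j : ℝ) * (2 * π / (2 * ℓ + 1))) : ℂ)) ^ ℓ :=
  integral_representation_finite_general ℓ m hm θ φ
end

section
/- Let ℓ ≥ 1 be an integer and m an integer with |m| ≤ ℓ. Then there exists a polynomial p ∈ ℂ[x₁,x₂,x₃] which is homogeneous of degree ℓ, satisfies Δp = 0, and whose evaluation satisfies p(X) = (1/(2π))·∫₀^{2π} e^{-i m α}·(X·N(α))^ℓ dα for every X ∈ ℝ³. That is, each Fourier coefficient of α ↦ (X·N(α))^ℓ is a homogeneous harmonic polynomial of degree ℓ in X. -/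
open Real MvPolynomial

lemma lap_linear_pow (ℓ : ℕ) (hℓ : 1 ≤ ℓ) (a b c : ℂ)
    (h : a ^ 2 + b ^ 2 + c ^ 2 = 0) :
    (∑ i : Fin 3, pderiv i (pderiv i
      ((C a * X 0 + C b * X 1 + C c * X 2 : MvPolynomial (Fin 3) ℂ) ^ ℓ))) = 0 := by
  set L : MvPolynomial (Fin 3) ℂ := C a * X 0 + C b * X 1 + C c * X 2 with hL
  have hd : ∀ i : Fin 3, pderiv i L = C (![a, b, c] i) := by
    intro i
    fin_cases i <;>
      simp [hL, pderiv_C_mul]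
  have hC : (C a) ^ 2 + (C b) ^ 2 + (C c) ^ 2 = (0 : MvPolynomial (Fin 3) ℂ) := by
    rw [← map_pow, ← map_pow, ← map_pow, ← map_add, ← map_add, h, map_zero]
  match ℓ, hℓ with
  | 1, _ =>
    simp only [pow_one]
    rw [Fin.sum_univ_three, hd 0, hd 1, hd 2]
    simp
  | (n+2), _ =>
    have h1 : ∀ i : Fin 3, pderiv i (pderiv i (L ^ (n + 2)))
        = (n + 2) • ((n + 1) • (L ^ n * C (![a, b, c] i)) * C (![a, b, c] i)) := by
      intro i
      rw [pderiv_pow, hd i]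
      have e1 : ((n + 2 : ℕ) : MvPolynomial (Fin 3) ℂ) * L ^ (n + 2 - 1) * C (![a, b, c] i)
          = (n + 2) • (L ^ (n + 1) * C (![a, b, c] i)) := by
        push_cast [nsmul_eq_mul]
        ring
      rw [e1, map_nsmul, pderiv_mul, pderiv_C, mul_zero, add_zero, pderiv_pow, hd i]
      push_cast [nsmul_eq_mul]
      ring
    rw [Fin.sum_univ_three, h1 0, h1 1, h1 2]
    simp only [nsmul_eq_mul, Matrix.cons_val_zero, Matrix.cons_val_one, Matrix.head_cons,
      Matrix.cons_val_two, Matrix.tail_cons]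
    push_cast
    linear_combination ((n : MvPolynomial (Fin 3) ℂ) + 2) * ((n : MvPolynomial (Fin 3) ℂ) + 1)
      * L ^ n * hC

/-- Interchange of a finite sum of weighted Fourier-type integrals with the integral. -/
lemma sum_integral_mul {ι : Type*} {A : Finset ι} (g : ι → ℝ → ℂ) (k : ι → ℂ)
    (hg : ∀ d ∈ A, IntervalIntegrable (g d) MeasureTheory.volume 0 (2 * π)) :
    ∑ d ∈ A, ((1 / (2 * (π : ℂ))) * ∫ α in (0:ℝ)..(2 * π), g d α) * k d
      = (1 / (2 * (π : ℂ))) * ∫ α in (0:ℝ)..(2 * π), ∑ d ∈ A, g d α * k d := by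
  rw [intervalIntegral.integral_finset_sum (fun d hd => (hg d hd).mul_const (k d)),
    Finset.mul_sum]
  refine Finset.sum_congr rfl fun d hd => ?_
  rw [intervalIntegral.integral_mul_const, mul_assoc]

/-- For `|m| ≤ ℓ`, the `m`-th Fourier coefficient of `α ↦ (X·N(α))^ℓ` is (the evaluation
at `X` of) a homogeneous harmonic polynomial of degree `ℓ` in three variables. -/
theorem fourier_coeff_is_harmonic_poly (ℓ : ℕ) (hℓ : 1 ≤ ℓ) (m : ℤ) (hm : |m| ≤ (ℓ : ℤ)) :
    ∃ p : MvPolynomial (Fin 3) ℂ,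
      p.IsHomogeneous ℓ ∧
      (∑ i : Fin 3, pderiv i (pderiv i p)) = 0 ∧
      ∀ X : Fin 3 → ℝ,
        eval (fun i => (X i : ℂ)) p
          = (1 / (2 * ↑π) : ℂ) *
              ∫ α in (0 : ℝ)..(2 * π),
                Complex.exp (-Complex.I * m * α) * (dotRC X (Nvec α)) ^ ℓ := by
  classical
  -- the generic polynomial over the coefficient ring ℂ[s, c]
  set P : MvPolynomial (Fin 3) (MvPolynomial (Fin 2) ℂ) :=
    (C (MvPolynomial.C 1) * X 0 + C (MvPolynomial.C Complex.I * MvPolynomial.X 0) * X 1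
      + C (MvPolynomial.C Complex.I * MvPolynomial.X 1) * X 2) ^ ℓ with hP
  set φ : ℝ → (MvPolynomial (Fin 2) ℂ →+* ℂ) := fun α => eval ![(Real.sin α : ℂ), (Real.cos α : ℂ)] with hφ
  set q : ℝ → MvPolynomial (Fin 3) ℂ := fun α => map (φ α) P with hqdef
  have hq : ∀ α, q α = (C 1 * X 0 + C (Complex.I * Real.sin α) * X 1
      + C (Complex.I * Real.cos α) * X 2) ^ ℓ := by
    intro α
    rw [hqdef]
    simp only [hP, hφ, map_pow, map_add, map_mul, map_C, map_X, eval_C, eval_X,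
      Matrix.cons_val_zero, Matrix.cons_val_one, Matrix.head_cons,
      Complex.ofReal_sin, Complex.ofReal_cos, map_one]
  -- continuity of the coefficient functions
  have hcont : ∀ d : Fin 3 →₀ ℕ, Continuous fun α => coeff d (q α) := by
    intro d
    have : (fun α => coeff d (q α)) = fun α =>
        eval ![(Real.sin α : ℂ), (Real.cos α : ℂ)] (coeff d P) := by
      funext α; rw [hqdef]; simp [coeff_map, hφ]
    rw [this]
    have hv : Continuous fun α : ℝ => (![(Real.sin α : ℂ), (Real.cos α : ℂ)] : Fin 2 → ℂ) := by
      refine continuous_pi fun i => ?_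
      match i with
      | 0 => exact Complex.continuous_ofReal.comp Real.continuous_sin
      | 1 => exact Complex.continuous_ofReal.comp Real.continuous_cos
    have h1 : Continuous fun x : Fin 2 → ℂ => eval x (coeff d P) :=
      MvPolynomial.continuous_eval (coeff d P)
    exact h1.comp hv
  set g : (Fin 3 →₀ ℕ) → ℝ → ℂ :=
    fun d α => Complex.exp (-Complex.I * m * α) * coeff d (q α) with hg
  have hint : ∀ d ∈ (Finset.univ.finsuppAntidiag ℓ : Finset (Fin 3 →₀ ℕ)),
      IntervalIntegrable (g d) MeasureTheory.volume 0 (2 * π) := by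
    intro d _
    apply Continuous.intervalIntegrable
    exact (Complex.continuous_exp.comp (by fun_prop)).mul (hcont d)
  set A : Finset (Fin 3 →₀ ℕ) := Finset.univ.finsuppAntidiag ℓ with hA
  have hdegA : ∀ d ∈ A, d.degree = ℓ := by
    intro d hd
    rw [hA, Finset.mem_finsuppAntidiag] at hd
    rw [Finsupp.degree, ← hd.1]
    exact Finset.sum_subset (Finset.subset_univ _)
      (fun i _ hi => Finsupp.notMem_support_iff.mp hi)
  -- homogeneity of q α and support control
  have hqhom : ∀ α, (q α).IsHomogeneous ℓ := by
    intro α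
    rw [hq α]
    have : (C (1:ℂ) * X 0 + C (Complex.I * Real.sin α) * X 1
        + C (Complex.I * Real.cos α) * X 2 : MvPolynomial (Fin 3) ℂ).IsHomogeneous 1 :=
      (((isHomogeneous_X ℂ 0).C_mul _).add ((isHomogeneous_X ℂ 1).C_mul _)).add
        ((isHomogeneous_X ℂ 2).C_mul _)
    simpa using this.pow ℓ
  have hrep : ∀ α, q α = ∑ d ∈ A, monomial d (coeff d (q α)) := by
    intro α
    conv_lhs => rw [as_sum (q α)]
    refine Finset.sum_subset ?_ ?_
    · intro d hd
      rw [hA, Finset.mem_finsuppAntidiag]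
      refine ⟨?_, Finset.subset_univ _⟩
      have hne := mem_support_iff.mp hd
      have hdeg : d.degree = ℓ := by
        by_contra hne'
        exact hne ((hqhom α).coeff_eq_zero hne')
      rw [← hdeg, Finsupp.degree]
      exact (Finset.sum_subset (Finset.subset_univ _)
        (fun i _ hi => Finsupp.notMem_support_iff.mp hi)).symm
    · intro d _ hd
      rw [notMem_support_iff] at hd
      simp [hd]
  -- the candidate polynomial
  set c : (Fin 3 →₀ ℕ) → ℂ :=
    fun d => (1 / (2 * (π : ℂ))) * ∫ α in (0:ℝ)..(2 * π), g d α with hc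
  refine ⟨∑ d ∈ A, monomial d (c d), ?_, ?_, ?_⟩
  · -- homogeneous
    exact IsHomogeneous.sum _ _ _ fun d hd => isHomogeneous_monomial _ (hdegA d hd)
  · -- harmonic
    set Δm : (Fin 3 →₀ ℕ) → MvPolynomial (Fin 3) ℂ :=
      fun d => ∑ i : Fin 3, pderiv i (pderiv i (monomial d (1:ℂ))) with hΔm
    have hΔlin : ∀ f : (Fin 3 →₀ ℕ) → ℂ,
        (∑ i : Fin 3, pderiv i (pderiv i (∑ d ∈ A, monomial d (f d))))
          = ∑ d ∈ A, f d • Δm d := by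
      intro f
      have hmono : ∀ d, monomial d (f d) = f d • monomial d (1:ℂ) := by
        intro d; rw [smul_monomial, smul_eq_mul, mul_one]
      have step : ∀ (i : Fin 3) (d : Fin 3 →₀ ℕ),
          pderiv i (pderiv i (monomial d (f d)))
            = f d • pderiv i (pderiv i (monomial d (1:ℂ))) := by
        intro i d
        rw [hmono d, (pderiv i).map_smul, (pderiv i).map_smul]
      calc ∑ i : Fin 3, pderiv i (pderiv i (∑ d ∈ A, monomial d (f d)))
          = ∑ i : Fin 3, ∑ d ∈ A, pderiv i (pderiv i (monomial d (f d))) := by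
            simp only [map_sum]
        _ = ∑ d ∈ A, ∑ i : Fin 3, f d • pderiv i (pderiv i (monomial d (1:ℂ))) := by
            rw [Finset.sum_comm]
            exact Finset.sum_congr rfl fun d _ =>
              Finset.sum_congr rfl fun i _ => step i d
        _ = ∑ d ∈ A, f d • Δm d := by
            simp only [hΔm, Finset.smul_sum]
    have hnull : ∀ α : ℝ, (1:ℂ)^2 + (Complex.I * Real.sin α)^2
        + (Complex.I * Real.cos α)^2 = 0 := by
      intro α
      have hsc : ((Real.sin α : ℂ))^2 + ((Real.cos α : ℂ))^2 = 1 := by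
        exact_mod_cast congrArg (fun x : ℝ => (x : ℂ)) (Real.sin_sq_add_cos_sq α)
      rw [mul_pow, mul_pow, Complex.I_sq]
      linear_combination -hsc
    have hΔq : ∀ α, (∑ d ∈ A, (coeff d (q α)) • Δm d) = 0 := by
      intro α
      have h1 := hΔlin fun d => coeff d (q α)
      rw [← hrep α] at h1
      rw [← h1, hq α]
      exact lap_linear_pow ℓ hℓ _ _ _ (hnull α)
    rw [hΔlin c]
    apply MvPolynomial.ext
    intro e
    rw [coeff_sum]
    simp only [coeff_smul, smul_eq_mul, coeff_zero, hc]
    rw [sum_integral_mul g (fun d => coeff e (Δm d)) hint]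
    have hzero : ∀ α : ℝ, (∑ d ∈ A, g d α * coeff e (Δm d)) = 0 := by
      intro α
      have h2 := congrArg (coeff e) (hΔq α)
      rw [coeff_sum, coeff_zero] at h2
      simp only [coeff_smul, smul_eq_mul] at h2
      calc ∑ d ∈ A, g d α * coeff e (Δm d)
          = Complex.exp (-Complex.I * m * α) * ∑ d ∈ A, coeff d (q α) * coeff e (Δm d) := by
            rw [Finset.mul_sum]; exact Finset.sum_congr rfl fun d _ => by rw [hg]; ring
        _ = 0 := by rw [h2, mul_zero]
    simp [hzero]
  · -- evaluation
    intro X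
    set X' : Fin 3 → ℂ := fun i => (X i : ℂ) with hX'
    rw [map_sum]
    simp only [eval_monomial, hc]
    rw [sum_integral_mul g (fun d => d.prod fun i k => X' i ^ k) hint]
    congr 1
    apply intervalIntegral.integral_congr
    intro α _
    have hev : ∑ d ∈ A, coeff d (q α) * (d.prod fun i k => X' i ^ k) = eval X' (q α) := by
      conv_rhs => rw [hrep α]
      rw [map_sum]
      exact (Finset.sum_congr rfl fun d _ => by rw [eval_monomial]).symm
    have hevq : eval X' (q α) = (dotRC X (Nvec α)) ^ ℓ := by
      rw [hq α, map_pow]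
      congr 1
      simp only [map_add, map_mul, eval_C, eval_X, dotRC, Nvec, Fin.sum_univ_three,
        Matrix.cons_val_zero, Matrix.cons_val_one, Matrix.head_cons, Matrix.cons_val_two,
        Matrix.tail_cons, hX']
      ring
    calc ∑ d ∈ A, g d α * (d.prod fun i k => X' i ^ k)
        = Complex.exp (-Complex.I * m * α)
            * ∑ d ∈ A, coeff d (q α) * (d.prod fun i k => X' i ^ k) := by
          rw [Finset.mul_sum]; exact Finset.sum_congr rfl fun d _ => by rw [hg]; ring
      _ = Complex.exp (-Complex.I * m * α) * (dotRC X (Nvec α)) ^ ℓ := by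
          rw [hev, hevq]
end

section
/- Let ℓ ≥ 1 be an integer, a = 2π/(2ℓ+1), and let j, j' be integers with -ℓ ≤ j, j' ≤ ℓ. Then ∫₀^{π} ∫₀^{2π} (X(θ,φ)·N_j)^ℓ · conj((X(θ,φ)·N_{j'})^ℓ) · sin θ dφ dθ = (4π·(ℓ!)²/((2ℓ+1)·(2ℓ)!)) · (2·cos((j-j')·π/(2ℓ+1)))^{2ℓ}, where X(θ,φ) = (cos θ, sin θ·cos φ, sin θ·sin φ) and conj denotes complex conjugation. In particular the functions Φ_j and Φ_{j'} are not orthogonal in L²(S²). -/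
open Real

/-- The point of the unit sphere with colatitude `θ` and longitude `φ`. -/
noncomputable def spherePt (θ φ : ℝ) : Fin 3 → ℝ :=
  ![Real.cos θ, Real.sin θ * Real.cos φ, Real.sin θ * Real.sin φ]

/-!
Put `ψ = φ + (α + β)/2` and `g = (α - β)/2`. Then `(X·N(α)) · conj (X·N(β)) = cos² g - V²` with
`V = X·W = sin θ cos ψ - i sin g cos θ` for the complex vector `W = (-i sin g, 1, 0)`, and
`W·W = cos² g`. The sphere moments of `V` behave as for a real vector of length `cos g`:
`∫ V^(2k) dσ = 4π/(2k+1) (cos² g)^k`, which follows from the one-dimensional moments of `cos` over a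
period and of `sin^(2q+1) cos^(2r)` over `[0, π]`. Expanding `(cos² g - V²)^ℓ` binomially leaves
`4π (cos² g)^ℓ ∑ₖ (-1)^k C(ℓ,k)/(2k+1)`, and this alternating sum is `4^ℓ (ℓ!)² / (2ℓ+1)!`.
-/

open Finset intervalIntegral

theorem Finset.sum_range_two_mul_add_one_of_odd_eq_zero {M : Type*} [AddCommMonoid M]
    (f : ℕ → M) (hf : ∀ q, f (2 * q + 1) = 0) (m : ℕ) :
    ∑ p ∈ range (2 * m + 1), f p = ∑ q ∈ range (m + 1), f (2 * q) := by
  induction m with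
  | zero => simp
  | succ m ih =>
    rw [show 2 * (m + 1) + 1 = 2 * m + 1 + 1 + 1 by ring, sum_range_succ, sum_range_succ, ih,
      hf, add_zero, sum_range_succ _ (m + 1)]
    rfl

theorem Function.Periodic.intervalIntegral_comp_add_right {E : Type*} [NormedAddCommGroup E]
    [NormedSpace ℝ E] {f : ℝ → E} {T : ℝ} (hf : Function.Periodic f T) (d : ℝ) :
    ∫ x in 0..T, f (x + d) = ∫ x in 0..T, f x := by
  simpa [add_comm T d] using hf.intervalIntegral_add_eq d 0

theorem intervalIntegral.integral_integral_finsetSum {ι E : Type*} [NormedAddCommGroup E]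
    [NormedSpace ℝ E] (s : Finset ι) (f : ι → ℝ → ℝ → E)
    (hf : ∀ i ∈ s, Continuous (Function.uncurry (f i))) (a b c d : ℝ) :
    ∫ x in a..b, ∫ y in c..d, ∑ i ∈ s, f i x y = ∑ i ∈ s, ∫ x in a..b, ∫ y in c..d, f i x y := by
  have hinner : ∀ x, ∫ y in c..d, ∑ i ∈ s, f i x y = ∑ i ∈ s, ∫ y in c..d, f i x y := fun x =>
    integral_finsetSum fun i hi =>
      ((hf i hi).comp (Continuous.prodMk_right x)).intervalIntegrable _ _
  simp_rw [hinner]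
  exact integral_finsetSum fun i hi =>
    (continuous_parametric_intervalIntegral_of_continuous' (hf i hi) c d).intervalIntegrable _ _

theorem integral_cos_pow_two_mul_add_one (q : ℕ) :
    ∫ x in 0..2 * π, cos x ^ (2 * q + 1) = 0 := by
  induction q with
  | zero => simp
  | succ q ih => rw [show 2 * (q + 1) + 1 = 2 * q + 1 + 2 by ring, integral_cos_pow, ih]; simp

theorem integral_cos_pow_two_mul (q : ℕ) :
    ∫ x in 0..2 * π, cos x ^ (2 * q) = 2 * π * q.centralBinom / 4 ^ q := by
  induction q with
  | zero => simp
  | succ q ih =>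
    rw [show 2 * (q + 1) = 2 * q + 2 by ring, integral_cos_pow, ih]
    simp only [cos_two_pi, sin_two_pi, cos_zero, sin_zero, mul_zero, sub_zero, zero_div, zero_add]
    have hrec : ((q + 1).centralBinom : ℝ) = 2 * (2 * q + 1) * q.centralBinom / (q + 1) := by
      rw [eq_div_iff (by positivity)]
      exact_mod_cast (mul_comm _ _).trans (Nat.succ_mul_centralBinom_succ q)
    rw [hrec]
    push_cast
    field_simp
    ring

section

-- local, because `open Nat` turns `φ` into the totient function
open Nat

theorem integral_sin_pow_two_mul_add_one_mul_cos_pow_two_mul (q r : ℕ) :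
    ∫ x in 0..π, sin x ^ (2 * q + 1) * cos x ^ (2 * r)
      = 2 * 4 ^ q * q ! * (q + r)! * (2 * r)! / ((2 * q + 2 * r + 1)! * r !) := by
  induction q generalizing r with
  | zero =>
    rw [integral_sin_pow_odd_mul_cos_pow, cos_zero, cos_pi]
    simp only [pow_zero, mul_one, integral_pow, Nat.factorial_zero]
    rw [show 2 * 0 + 2 * r + 1 = 2 * r + 1 by ring, Nat.factorial_succ, zero_add,
      (odd_two_mul_add_one r).neg_one_pow]
    push_cast
    field_simp
    ring
  | succ q ih =>
    have hsplit : ∀ x, sin x ^ (2 * (q + 1) + 1) * cos x ^ (2 * r)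
        = sin x ^ (2 * q + 1) * cos x ^ (2 * r) - sin x ^ (2 * q + 1) * cos x ^ (2 * (r + 1)) := by
      intro x
      rw [show 2 * (q + 1) + 1 = 2 * q + 1 + 2 by ring, pow_add, sin_sq]
      ring
    simp_rw [hsplit]
    rw [integral_sub (Continuous.intervalIntegrable (by fun_prop) _ _)
      (Continuous.intervalIntegrable (by fun_prop) _ _), ih, ih,
      show q + 1 + r = q + r + 1 by ring, show q + (r + 1) = q + r + 1 by ring,
      show 2 * (q + 1) + 2 * r + 1 = 2 * q + 2 * r + 1 + 1 + 1 by ring,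
      show 2 * q + 2 * (r + 1) + 1 = 2 * q + 2 * r + 1 + 1 + 1 by ring,
      show 2 * (r + 1) = 2 * r + 1 + 1 by ring]
    simp only [Nat.factorial_succ]
    push_cast
    field_simp
    ring

theorem sum_range_neg_one_pow_mul_choose_div (ℓ : ℕ) :
    ∑ k ∈ range (ℓ + 1), (-1 : ℝ) ^ k * ℓ.choose k / (2 * k + 1)
      = 4 ^ ℓ * ℓ ! ^ 2 / (2 * ℓ + 1)! := by
  -- both sides are `½ ∫ u in -1..1, (1 - u²)^ℓ`
  have h := integral_sin_pow_two_mul_add_one_mul_cos_pow_two_mul ℓ 0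
  rw [integral_sin_pow_odd_mul_cos_pow, cos_zero, cos_pi] at h
  have hexp : ∀ u : ℝ, u ^ (2 * 0) * (1 - u ^ 2) ^ ℓ
      = ∑ k ∈ range (ℓ + 1), (-1 : ℝ) ^ k * ℓ.choose k * u ^ (2 * k) := by
    intro u
    rw [sub_eq_neg_add, add_pow, mul_sum]
    refine sum_congr rfl fun k _ => ?_
    rw [neg_pow, ← pow_mul]
    ring
  have hterm : ∀ k : ℕ, (-1 : ℝ) ^ k * ℓ.choose k * ((1 ^ (2 * k + 1) - (-1) ^ (2 * k + 1))
      / ((2 * k : ℕ) + 1)) = 2 * ((-1) ^ k * ℓ.choose k / (2 * k + 1)) := by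
    intro k
    rw [(odd_two_mul_add_one k).neg_one_pow]
    push_cast
    ring
  simp_rw [hexp] at h
  rw [integral_finsetSum (fun k _ => Continuous.intervalIntegrable (by fun_prop) _ _)] at h
  simp_rw [integral_const_mul, integral_pow, hterm, ← mul_sum] at h
  rw [show 2 * ℓ + 2 * 0 + 1 = 2 * ℓ + 1 by ring, ℓ.add_zero] at h
  simp only [Nat.factorial_zero, Nat.cast_one, mul_one] at h
  linear_combination h / 2

theorem integral_mul_cos_add_pow_two_mul (x y : ℂ) (m : ℕ) :
    ∫ ψ in 0..2 * π, (x * cos ψ + y) ^ (2 * m)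
      = ∑ b ∈ range (m + 1), (((2 * m).choose (2 * b) * (2 * π * b.centralBinom / 4 ^ b) : ℝ) : ℂ)
          * x ^ (2 * b) * y ^ (2 * (m - b)) := by
  have hterm : ∀ p ∈ range (2 * m + 1), ∫ ψ in 0..2 * π, (x * cos ψ) ^ p * y ^ (2 * m - p)
      * (2 * m).choose p = x ^ p * y ^ (2 * m - p) * (2 * m).choose p
        * ((∫ ψ in 0..2 * π, cos ψ ^ p : ℝ) : ℂ) := by
    intro p _
    rw [← integral_ofReal, ← integral_const_mul]
    congr 1 with ψ
    push_cast
    ring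
  simp_rw [add_pow]
  rw [integral_finsetSum (fun p _ => Continuous.intervalIntegrable (by fun_prop) _ _),
    sum_congr rfl hterm, sum_range_two_mul_add_one_of_odd_eq_zero _
      (fun q => by rw [integral_cos_pow_two_mul_add_one]; simp)]
  refine sum_congr rfl fun b hb => ?_
  rw [integral_cos_pow_two_mul, show 2 * m - 2 * b = 2 * (m - b) by omega]
  push_cast
  ring

theorem integral_integral_sin_mul_cos_add_pow_two_mul (z : ℂ) (m : ℕ) :
    ∫ θ in 0..π, ∫ ψ in 0..2 * π, ((sin θ : ℂ) * cos ψ + z * cos θ) ^ (2 * m) * sin θ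
      = 4 * π / (2 * m + 1) * (1 + z ^ 2) ^ m := by
  have hcoeff : ∀ b ∈ range (m + 1),
      (2 * m).choose (2 * b) * (2 * π * b.centralBinom / 4 ^ b)
        * ∫ θ in 0..π, sin θ ^ (2 * b + 1) * cos θ ^ (2 * (m - b))
      = 4 * π / (2 * m + 1) * m.choose b := by
    intro b hb
    have hbm : b ≤ m := Nat.lt_succ_iff.mp (mem_range.mp hb)
    rw [integral_sin_pow_two_mul_add_one_mul_cos_pow_two_mul, Nat.centralBinom_eq_two_mul_choose,
      Nat.cast_choose ℝ (by omega : 2 * b ≤ 2 * m), Nat.cast_choose ℝ hbm,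
      Nat.cast_choose ℝ (by omega : b ≤ 2 * b), show b + (m - b) = m by omega,
      show 2 * b + 2 * (m - b) + 1 = 2 * m + 1 by omega, show 2 * m - 2 * b = 2 * (m - b) by omega,
      show 2 * b - b = b by omega, Nat.factorial_succ (2 * m)]
    push_cast
    field_simp
    ring
  have hinner : ∀ θ : ℝ, ∫ ψ in 0..2 * π, ((sin θ : ℂ) * cos ψ + z * cos θ) ^ (2 * m) * sin θ
      = ∑ b ∈ range (m + 1), (((2 * m).choose (2 * b) * (2 * π * b.centralBinom / 4 ^ b) : ℝ) : ℂ)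
          * z ^ (2 * (m - b)) * ((sin θ ^ (2 * b + 1) * cos θ ^ (2 * (m - b)) : ℝ) : ℂ) := by
    intro θ
    rw [integral_mul_const, integral_mul_cos_add_pow_two_mul, sum_mul]
    refine sum_congr rfl fun b _ => ?_
    push_cast
    ring
  rw [integral_congr (fun θ _ => hinner θ),
    integral_finsetSum (fun b _ => Continuous.intervalIntegrable (by fun_prop) _ _)]
  simp_rw [integral_const_mul, integral_ofReal]
  rw [add_pow, mul_sum]
  refine sum_congr rfl fun b hb => ?_
  rw [mul_right_comm, ← Complex.ofReal_mul, hcoeff b hb]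
  push_cast
  ring

theorem integral_integral_one_add_sq_sub_sq_pow (z : ℂ) (ℓ : ℕ) :
    ∫ θ in 0..π, ∫ ψ in 0..2 * π,
        ((1 + z ^ 2) - ((sin θ : ℂ) * cos ψ + z * cos θ) ^ 2) ^ ℓ * sin θ
      = 4 * π * (1 + z ^ 2) ^ ℓ * ((4 ^ ℓ * ℓ ! ^ 2 / (2 * ℓ + 1)! : ℝ) : ℂ) := by
  have hexp : ∀ θ ψ : ℝ,
      ((1 + z ^ 2) - ((sin θ : ℂ) * cos ψ + z * cos θ) ^ 2) ^ ℓ * sin θ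
        = ∑ k ∈ range (ℓ + 1), (-1) ^ k * ℓ.choose k * (1 + z ^ 2) ^ (ℓ - k)
          * (((sin θ : ℂ) * cos ψ + z * cos θ) ^ (2 * k) * sin θ) := by
    intro θ ψ
    rw [sub_eq_neg_add, add_pow, sum_mul]
    refine sum_congr rfl fun k _ => ?_
    rw [neg_pow, ← pow_mul]
    ring
  simp_rw [hexp]
  rw [integral_integral_finsetSum _ _ (fun k _ => by fun_prop)]
  simp_rw [integral_const_mul, integral_integral_sin_mul_cos_add_pow_two_mul]
  rw [← sum_range_neg_one_pow_mul_choose_div, Complex.ofReal_sum, mul_sum]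
  refine sum_congr rfl fun k hk => ?_
  rw [← pow_mul_pow_sub (1 + z ^ 2) (Nat.lt_succ_iff.mp (mem_range.mp hk))]
  push_cast
  ring

end

theorem dotRC_spherePt_Nvec (θ φ α : ℝ) :
    dotRC (spherePt θ φ) (Nvec α) = cos θ + Complex.I * sin θ * sin (φ + α) := by
  simp only [dotRC, Nvec, spherePt, Fin.sum_univ_three, Matrix.cons_val_zero,
    Matrix.cons_val_one, Matrix.cons_val_two, Matrix.tail_cons, Matrix.head_cons, sin_add]
  push_cast
  ring

theorem dotRC_mul_conj_dotRC (θ φ d g : ℝ) :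
    dotRC (spherePt θ φ) (Nvec (d + g)) * starRingEnd ℂ (dotRC (spherePt θ φ) (Nvec (d - g)))
      = (1 + (-Complex.I * sin g) ^ 2)
        - ((sin θ : ℂ) * cos (φ + d) + (-Complex.I * sin g) * cos θ) ^ 2 := by
  rw [dotRC_spherePt_Nvec, dotRC_spherePt_Nvec, ← add_assoc, ← add_sub_assoc, sin_add, sin_sub]
  set s := sin θ
  set c := cos θ
  set sψ := sin (φ + d)
  set cψ := cos (φ + d)
  set sg := sin g
  set cg := cos g
  have eθ : (s : ℂ) ^ 2 + c ^ 2 = 1 := by exact_mod_cast sin_sq_add_cos_sq θ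
  have eψ : (sψ : ℂ) ^ 2 + cψ ^ 2 = 1 := by exact_mod_cast sin_sq_add_cos_sq (φ + d)
  have eg : (sg : ℂ) ^ 2 + cg ^ 2 = 1 := by exact_mod_cast sin_sq_add_cos_sq g
  simp only [map_add, map_sub, map_mul, Complex.conj_ofReal, Complex.conj_I, Complex.ofReal_mul,
    Complex.ofReal_add, Complex.ofReal_sub]
  linear_combination (s : ℂ) ^ 2 * sψ ^ 2 * eg + (s : ℂ) ^ 2 * (1 - sg ^ 2) * eψ
    + (1 - (sg : ℂ) ^ 2) * eθ
    + (-(s : ℂ) ^ 2 * (sψ * cg + cψ * sg) * (sψ * cg - cψ * sg) - sg ^ 2 + sg ^ 2 * c ^ 2)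
      * Complex.I_sq

theorem integral_dotRC_pow_mul_conj_pow (θ d g : ℝ) (ℓ : ℕ) :
    ∫ φ in 0..2 * π, dotRC (spherePt θ φ) (Nvec (d + g)) ^ ℓ
        * starRingEnd ℂ (dotRC (spherePt θ φ) (Nvec (d - g)) ^ ℓ) * sin θ
      = ∫ ψ in 0..2 * π, ((1 + (-Complex.I * sin g) ^ 2)
          - ((sin θ : ℂ) * cos ψ + (-Complex.I * sin g) * cos θ) ^ 2) ^ ℓ * sin θ := by
  simp_rw [map_pow, ← mul_pow, dotRC_mul_conj_dotRC]
  exact (cos_periodic.comp fun c : ℝ => ((1 + (-Complex.I * sin g) ^ 2)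
    - ((sin θ : ℂ) * c + (-Complex.I * sin g) * cos θ) ^ 2) ^ ℓ * sin θ
    ).intervalIntegral_comp_add_right d

theorem scalar_product_Phi_general (ℓ : ℕ) (j j' : ℤ) :
    (∫ θ in (0 : ℝ)..π, ∫ φ in (0 : ℝ)..(2 * π),
        (dotRC (spherePt θ φ) (Nvec ((j : ℝ) * (2 * π / (2 * ℓ + 1))))) ^ ℓ *
          (starRingEnd ℂ)
            ((dotRC (spherePt θ φ) (Nvec ((j' : ℝ) * (2 * π / (2 * ℓ + 1))))) ^ ℓ) *
          (Real.sin θ : ℂ))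
      = (((4 * π * (Nat.factorial ℓ) ^ 2 / ((2 * ℓ + 1) * Nat.factorial (2 * ℓ))) *
            (2 * Real.cos ((j - j') * π / (2 * ℓ + 1))) ^ (2 * ℓ) : ℝ) : ℂ) := by
  set g : ℝ := (j - j') * π / (2 * ℓ + 1)
  set d : ℝ := (j + j') * π / (2 * ℓ + 1)
  have hj : (j : ℝ) * (2 * π / (2 * ℓ + 1)) = d + g := by
    simp only [d, g]; field_simp; ring
  have hj' : (j' : ℝ) * (2 * π / (2 * ℓ + 1)) = d - g := by
    simp only [d, g]; field_simp; ring
  have hcos : 1 + (-Complex.I * sin g) ^ 2 = ((cos g ^ 2 : ℝ) : ℂ) := by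
    rw [cos_sq', Complex.ofReal_sub, Complex.ofReal_one, Complex.ofReal_pow]
    linear_combination (sin g : ℂ) ^ 2 * Complex.I_sq
  have hpow : (2 * cos g) ^ (2 * ℓ) = 4 ^ ℓ * (cos g ^ 2) ^ ℓ := by
    rw [pow_mul, ← mul_pow]
    ring
  rw [hj, hj', integral_congr (fun θ _ => integral_dotRC_pow_mul_conj_pow θ d g ℓ),
    integral_integral_one_add_sq_sub_sq_pow, hcos, hpow, Nat.factorial_succ (2 * ℓ)]
  push_cast
  field_simp

/-- The `L²(S²)` scalar product of the basis functions `Φ_j` and `Φ_{j'}`: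
`⟨Φ_j, Φ_{j'}⟩ = (4π (ℓ!)² / ((2ℓ+1)(2ℓ)!)) (2 cos((j-j')π/(2ℓ+1)))^{2ℓ}`.
In particular it is nonzero, so the basis is not orthogonal. -/
theorem scalar_product_Phi (ℓ : ℕ) (hℓ : 1 ≤ ℓ) (j j' : ℤ)
    (hj : j ∈ Finset.Icc (-(ℓ : ℤ)) ℓ) (hj' : j' ∈ Finset.Icc (-(ℓ : ℤ)) ℓ) :
    (∫ θ in (0 : ℝ)..π, ∫ φ in (0 : ℝ)..(2 * π),
        (dotRC (spherePt θ φ) (Nvec ((j : ℝ) * (2 * π / (2 * ℓ + 1))))) ^ ℓ *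
          (starRingEnd ℂ)
            ((dotRC (spherePt θ φ) (Nvec ((j' : ℝ) * (2 * π / (2 * ℓ + 1))))) ^ ℓ) *
          (Real.sin θ : ℂ))
      = (((4 * π * (Nat.factorial ℓ) ^ 2 / ((2 * ℓ + 1) * Nat.factorial (2 * ℓ))) *
            (2 * Real.cos ((j - j') * π / (2 * ℓ + 1))) ^ (2 * ℓ) : ℝ) : ℂ) :=
  scalar_product_Phi_general ℓ j j'
end

section
/- Let ℓ ≥ 1 be an integer, a = 2π/(2ℓ+1), and let m be an integer with -ℓ ≤ m ≤ ℓ. Then for all real θ, φ: Σ_{j=-ℓ}^{ℓ} e^{-i m j a}·[cos θ + i·sin θ·sin(φ + j·a)]^ℓ = (2ℓ+1)·e^{i m φ}·Σ_{q=max(0,m)}^{⌊(ℓ+m)/2⌋} (ℓ!·(-1)^{q-m}·2^{m-2q} / ((ℓ+m-2q)!·q!·(q-m)!)) · (cos θ)^{ℓ+m-2q} · (sin θ)^{2q-m}. -/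
/-!
Put `X_j = exp (i (φ + j a))`. Then `i sin (φ + j a) = (X_j - X_j⁻¹) / 2` and
`e^{-imja} = e^{imφ} X_j^{-m}`, so the `j`-th summand is
`e^{imφ} X_j^{-m} (cos θ + (sin θ / 2) (X_j - X_j⁻¹))^ℓ`, and two binomial expansions write
the power as a Laurent polynomial in `X_j` with exponents in `[-ℓ, ℓ]`.
Since `X_j = e^{iφ} ζ^j` with `ζ = e^{ia}` a primitive `(2ℓ+1)`-th root of unity, summing
over `j` annihilates every monomial `X^t` with `t ≠ m` (as `|t - m| ≤ 2ℓ < 2ℓ+1`) and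
multiplies the coefficient of `X^m` by `2ℓ+1`; that coefficient is the stated sum over `q`.
-/

open Real Finset

theorem sub_inv_pow {K : Type*} [Field K] {X : K} (hX : X ≠ 0) (k : ℕ) :
    (X - X⁻¹) ^ k
      = ∑ q ∈ range (k + 1), (-1) ^ (k - q) * k.choose q * X ^ (2 * (q : ℤ) - k) := by
  rw [sub_eq_add_neg, add_pow]
  refine sum_congr rfl fun q hq => ?_
  have hqk : q ≤ k := Nat.lt_succ_iff.mp (mem_range.mp hq)
  rw [neg_pow, inv_pow, show 2 * (q : ℤ) - k = q - (k - q : ℕ) by omega, zpow_sub₀ hX,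
    zpow_natCast, zpow_natCast]
  ring

theorem add_mul_sub_inv_pow {K : Type*} [Field K] {X : K} (hX : X ≠ 0) (c d : K) (ℓ : ℕ) :
    (c + d * (X - X⁻¹)) ^ ℓ = ∑ p ∈ (range (ℓ + 1)).sigma fun k => range (k + 1),
      (ℓ.choose p.1 * p.1.choose p.2 * (-1) ^ (p.1 - p.2) * c ^ (ℓ - p.1) * d ^ p.1) *
        X ^ (2 * (p.2 : ℤ) - p.1) := by
  rw [add_comm, add_pow, sum_sigma]
  refine sum_congr rfl fun k _ => ?_
  rw [mul_pow, sub_inv_pow hX, mul_sum, sum_mul, sum_mul]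
  refine sum_congr rfl fun q _ => ?_
  ring

theorem Complex.I_mul_sin (w : ℂ) :
    Complex.I * Complex.sin w
      = (Complex.exp (w * Complex.I) - (Complex.exp (w * Complex.I))⁻¹) / 2 := by
  rw [Complex.sin, ← Complex.exp_neg, neg_mul]
  linear_combination
    (Complex.exp (-(w * Complex.I)) - Complex.exp (w * Complex.I)) / 2 * Complex.I_sq

theorem exp_neg_mul_mul_add_I_mul_sin_pow (ℓ : ℕ) (m j : ℤ) (a φ : ℝ) (c s : ℂ) :
    Complex.exp (-Complex.I * m * j * (a : ℂ)) *
        (c + Complex.I * s * (Real.sin (φ + j * a) : ℂ)) ^ ℓ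
      = Complex.exp (Complex.I * m * φ) * (Complex.exp ((φ + j * a : ℝ) * Complex.I) ^ (-m) *
          (c + s / 2 * (Complex.exp ((φ + j * a : ℝ) * Complex.I) -
            (Complex.exp ((φ + j * a : ℝ) * Complex.I))⁻¹)) ^ ℓ) := by
  rw [Complex.ofReal_sin, mul_right_comm _ s, Complex.I_mul_sin, ← Complex.exp_int_mul,
    ← mul_assoc, ← Complex.exp_add]
  push_cast
  ring_nf

theorem sum_Ico_zpow_eq_zero {K : Type*} [DivisionRing K] {w : K} {n : ℕ} (hw : w ^ n = 1)
    (hw1 : w ≠ 1) (r : ℤ) : ∑ j ∈ Ico r (r + n), w ^ j = 0 := by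
  rcases Nat.eq_zero_or_pos n with rfl | hn
  · simp
  have hw0 : w ≠ 0 := by rintro rfl; simp [hn.ne'] at hw
  calc ∑ j ∈ Ico r (r + n), w ^ j = w ^ r * ∑ i ∈ range n, w ^ i := by
        rw [Int.Ico_eq_finset_map, sum_map, add_sub_cancel_left, Int.toNat_natCast, mul_sum]
        simp [zpow_add₀ hw0]
    _ = 0 := by rw [geom_sum_eq hw1, hw, sub_self, zero_div, mul_zero]

theorem IsPrimitiveRoot.sum_Ico_zpow_zpow {K : Type*} [Field K] {ζ : K} {n : ℕ}
    (hζ : IsPrimitiveRoot ζ n) (r t : ℤ) :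
    ∑ j ∈ Ico r (r + n), (ζ ^ t) ^ j = if (n : ℤ) ∣ t then (n : K) else 0 := by
  split_ifs with hdvd
  · simp [(hζ.zpow_eq_one_iff_dvd t).mpr hdvd]
  · refine sum_Ico_zpow_eq_zero ?_ (mt (hζ.zpow_eq_one_iff_dvd t).mp hdvd) r
    rw [← zpow_natCast, ← zpow_mul, mul_comm, zpow_mul, zpow_natCast, hζ.pow_eq_one, one_zpow]

theorem IsPrimitiveRoot.sum_Ico_zpow_neg_mul_sum_zpow {K ι : Type*} [Field K] {ζ z : K}
    {n : ℕ} (hζ : IsPrimitiveRoot ζ n) (hz : z ≠ 0) (r m : ℤ) (s : Finset ι) (b : ι → K)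
    (e : ι → ℤ) (he : ∀ i ∈ s, |e i - m| < n) :
    ∑ j ∈ Ico r (r + n), (z * ζ ^ j) ^ (-m) * ∑ i ∈ s, b i * (z * ζ ^ j) ^ e i
      = n * ∑ i ∈ s with e i = m, b i := by
  rcases Nat.eq_zero_or_pos n with rfl | hn
  · simp
  have hζ0 : ζ ≠ 0 := hζ.ne_zero hn.ne'
  have hterm : ∀ i ∈ s,
      ∑ j ∈ Ico r (r + n), (z * ζ ^ j) ^ (-m) * (b i * (z * ζ ^ j) ^ e i)
        = n * if e i = m then b i else 0 := by
    intro i hi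
    have hsplit : ∀ j : ℤ, (z * ζ ^ j) ^ (-m) * (b i * (z * ζ ^ j) ^ e i)
        = b i * z ^ (e i - m) * (ζ ^ (e i - m)) ^ j := by
      intro j
      rw [mul_left_comm, ← zpow_add₀ (mul_ne_zero hz (zpow_ne_zero _ hζ0)), neg_add_eq_sub,
        mul_zpow, ← zpow_mul, mul_comm j, zpow_mul, mul_assoc]
    have hdvd : (n : ℤ) ∣ e i - m ↔ e i = m :=
      ⟨fun h => sub_eq_zero.mp (Int.eq_zero_of_abs_lt_dvd h (he i hi)), fun h => by simp [h]⟩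
    rw [sum_congr rfl fun j _ => hsplit j, ← mul_sum, hζ.sum_Ico_zpow_zpow]
    by_cases h : e i = m <;> simp [hdvd, h, mul_comm]
  rw [sum_filter, mul_sum]
  simp_rw [mul_sum]
  rw [sum_comm]
  exact sum_congr rfl hterm

theorem sum_Icc_max_div_two_eq_sum_filter_sigma {M : Type*} [AddCommMonoid M] (ℓ : ℕ)
    (m : ℤ) (F : ℤ → M) :
    ∑ q ∈ Icc (max 0 m) ((ℓ + m) / 2), F q
      = ∑ p ∈ ((range (ℓ + 1)).sigma fun k => range (k + 1)) with 2 * (p.2 : ℤ) - p.1 = m,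
          F p.2 := by
  refine sum_nbij' (fun q => ⟨(2 * q - m).toNat, q.toNat⟩) (fun p => p.2) ?_ ?_ ?_ ?_ ?_
  all_goals simp only [mem_Icc, mem_filter, mem_sigma, mem_range, Sigma.forall]
  · intro q hq; omega
  · intro k q hp; omega
  · intro q hq; omega
  · intro k q hp
    obtain rfl : m = 2 * q - k := by omega
    simp
  · intro q hq
    rw [Int.toNat_of_nonneg (by omega)]

theorem cast_choose_mul_choose {K : Type*} [Field K] [CharZero K] {ℓ k q : ℕ} (hqk : q ≤ k)
    (hkℓ : k ≤ ℓ) :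
    (ℓ.choose k * k.choose q : K)
      = ℓ.factorial / ((ℓ - k).factorial * q.factorial * (k - q).factorial) := by
  rw [eq_div_iff (by simp [Nat.factorial_ne_zero]),
    ← Nat.choose_mul_factorial_mul_factorial hkℓ,
    ← Nat.choose_mul_factorial_mul_factorial hqk]
  push_cast
  ring

theorem choose_mul_choose_term_eq {K : Type*} [Field K] [CharZero K] {ℓ k q : ℕ} {m : ℤ}
    (hqk : q ≤ k) (hkℓ : k ≤ ℓ) (hm : 2 * (q : ℤ) - k = m) (c s : K) :
    ℓ.choose k * k.choose q * (-1) ^ (k - q) * c ^ (ℓ - k) * (s / 2) ^ k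
      = ℓ.factorial * (-1) ^ ((q : ℤ) - m) * (2 : K) ^ (m - 2 * q) /
          (((ℓ : ℤ) + m - 2 * q).toNat.factorial * (q : ℤ).toNat.factorial *
            ((q : ℤ) - m).toNat.factorial) *
        c ^ ((ℓ : ℤ) + m - 2 * q).toNat * s ^ (2 * (q : ℤ) - m).toNat := by
  subst hm
  rw [show ((ℓ : ℤ) + (2 * q - k) - 2 * q).toNat = ℓ - k by omega, Int.toNat_natCast,
    show ((q : ℤ) - (2 * q - k)).toNat = k - q by omega,
    show (2 * (q : ℤ) - (2 * q - k)).toNat = k by omega,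
    show (q : ℤ) - (2 * q - k) = (k - q : ℕ) by omega, zpow_natCast,
    show 2 * (q : ℤ) - k - 2 * q = -(k : ℤ) by ring, zpow_neg, zpow_natCast,
    cast_choose_mul_choose hqk hkℓ, div_pow]
  ring

theorem finite_sum_explicit_general (ℓ : ℕ) (m : ℤ)
    (hm : m ∈ Finset.Icc (-(ℓ : ℤ)) ℓ) (θ φ : ℝ) :
    (∑ j ∈ Finset.Icc (-(ℓ : ℤ)) ℓ,
        Complex.exp (-Complex.I * m * j * ((2 * π / (2 * ℓ + 1) : ℝ) : ℂ)) *
          ((Real.cos θ : ℂ) + Complex.I * (Real.sin θ : ℂ) *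
            (Real.sin (φ + (j : ℝ) * (2 * π / (2 * ℓ + 1))) : ℂ)) ^ ℓ)
      = (2 * ℓ + 1 : ℂ) * Complex.exp (Complex.I * m * φ) *
          ∑ q ∈ Finset.Icc (max 0 m) (((ℓ : ℤ) + m) / 2),
            ((Nat.factorial ℓ : ℂ) * (-1 : ℂ) ^ (q - m) * (2 : ℂ) ^ (m - 2 * q) /
                ((Nat.factorial ((ℓ : ℤ) + m - 2 * q).toNat : ℂ) *
                  (Nat.factorial q.toNat : ℂ) * (Nat.factorial (q - m).toNat : ℂ))) *
              (Real.cos θ : ℂ) ^ ((ℓ : ℤ) + m - 2 * q).toNat *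
              (Real.sin θ : ℂ) ^ (2 * q - m).toNat := by
  obtain ⟨hm₁, hm₂⟩ := mem_Icc.mp hm
  set ζ := Complex.exp (2 * π * Complex.I / (2 * ℓ + 1 : ℕ))
  have hζ : IsPrimitiveRoot ζ (2 * ℓ + 1) := Complex.isPrimitiveRoot_exp _ (by omega)
  have hX (j : ℤ) : Complex.exp ((φ + j * (2 * π / (2 * ℓ + 1)) : ℝ) * Complex.I)
      = Complex.exp (φ * Complex.I) * ζ ^ j := by
    rw [← Complex.exp_int_mul, ← Complex.exp_add]
    push_cast
    ring_nf
  have hwindow : Icc (-(ℓ : ℤ)) ℓ = Ico (-(ℓ : ℤ)) (-ℓ + (2 * ℓ + 1 : ℕ)) := by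
    ext; simp only [mem_Icc, mem_Ico]; omega
  have hdeg : ∀ p ∈ (range (ℓ + 1)).sigma fun k => range (k + 1),
      |2 * (p.2 : ℤ) - p.1 - m| < (2 * ℓ + 1 : ℕ) := by
    intro p hp
    simp only [mem_sigma, mem_range] at hp
    rw [abs_lt]; omega
  simp_rw [exp_neg_mul_mul_add_I_mul_sin_pow, add_mul_sub_inv_pow (Complex.exp_ne_zero _), hX]
  rw [← mul_sum, hwindow,
    hζ.sum_Ico_zpow_neg_mul_sum_zpow (Complex.exp_ne_zero _) _ _ _ _ _ hdeg,
    sum_Icc_max_div_two_eq_sum_filter_sigma, sum_congr rfl fun p hp => ?_]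
  · rw [Nat.cast_succ, Nat.cast_mul, Nat.cast_ofNat]; ring
  · simp only [mem_filter, mem_sigma] at hp
    obtain ⟨⟨hk, hq⟩, hqk⟩ := hp
    exact choose_mul_choose_term_eq (mem_range_succ_iff.mp hq) (mem_range_succ_iff.mp hk) hqk
      _ _

/-- Explicit evaluation of the finite sum `Σ_j e^{-imja} [cos θ + i sin θ sin(φ+ja)]^ℓ`,
`a = 2π/(2ℓ+1)`: it is `(2ℓ+1) e^{imφ}` times an explicit polynomial in `cos θ, sin θ`. -/
theorem finite_sum_explicit (ℓ : ℕ) (hℓ : 1 ≤ ℓ) (m : ℤ)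
    (hm : m ∈ Finset.Icc (-(ℓ : ℤ)) ℓ) (θ φ : ℝ) :
    (∑ j ∈ Finset.Icc (-(ℓ : ℤ)) ℓ,
        Complex.exp (-Complex.I * m * j * ((2 * π / (2 * ℓ + 1) : ℝ) : ℂ)) *
          ((Real.cos θ : ℂ) + Complex.I * (Real.sin θ : ℂ) *
            (Real.sin (φ + (j : ℝ) * (2 * π / (2 * ℓ + 1))) : ℂ)) ^ ℓ)
      = (2 * ℓ + 1 : ℂ) * Complex.exp (Complex.I * m * φ) *
          ∑ q ∈ Finset.Icc (max 0 m) (((ℓ : ℤ) + m) / 2),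
            ((Nat.factorial ℓ : ℂ) * (-1 : ℂ) ^ (q - m) * (2 : ℂ) ^ (m - 2 * q) /
                ((Nat.factorial ((ℓ : ℤ) + m - 2 * q).toNat : ℂ) *
                  (Nat.factorial q.toNat : ℂ) * (Nat.factorial (q - m).toNat : ℂ))) *
              (Real.cos θ : ℂ) ^ ((ℓ : ℤ) + m - 2 * q).toNat *
              (Real.sin θ : ℂ) ^ (2 * q - m).toNat :=
  finite_sum_explicit_general ℓ m hm θ φ
end

section
/- Let ℓ ≥ 1 be an integer, a = 2π/(2ℓ+1), ρ = exp(2πi/(2ℓ+1)). Let g be a real 3×3 special orthogonal matrix (g ∈ SO(3)), set α = (0,1,-i) ∈ ℂ³ and β = (1,0,0) ∈ ℂ³, and let j be an integer with -ℓ ≤ j ≤ ℓ such that (gβ)·N_j ≠ 0. Then for every X ∈ ℝ³: ((gX)·N_j)^ℓ = Σ_{k=-ℓ}^{ℓ} G_j^k · (X·N_k)^ℓ, where G_j^k = (1/(2ℓ+1))·Σ_{n=-ℓ}^{ℓ} ρ^{-k n} · ((gα)·N_j)^n · ((gβ)·N_j)^{ℓ-n}, the powers with possibly negative integer exponent being taken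 in ℂ (zpow; both bases are nonzero under the hypothesis). -/
open Real

/-- The bilinear (non-Hermitian) pairing on `ℂ³`. -/
noncomputable def dotC (W Z : Fin 3 → ℂ) : ℂ :=
  ∑ i, W i * Z i

/-!
Put `M = gᵀ N_j`. Then `(gX)·N_j = X·M`, `(gβ)·N_j = M₀`, `(gα)·N_j = M₁ - i M₂`, and `M` is again
a null vector, since `g` is orthogonal. The null vectors with first coordinate `1` are
`N(w) = (1, (w - w⁻¹)/2, i (w + w⁻¹)/2)`, `w ∈ ℂˣ`, with `N_k = N(ρ^k)`; so `M = M₀ N(w)` for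
`w = (M₁ - i M₂)/M₀`. Hence `((gX)·N_j)^ℓ = M₀^ℓ P(w)` for the Laurent polynomial
`P(w) = (X·N(w))^ℓ`, whose exponents lie in `[-ℓ, ℓ]`, and the claimed formula is the discrete
Fourier interpolation of `P` from its values `P(ρ^k) = (X·N_k)^ℓ` at the `(2ℓ+1)`-st roots of unity.
-/

open Finset Polynomial

theorem sum_Icc_neg_natCast_eq_sum_range {M : Type*} [AddCommMonoid M] (ℓ : ℕ) (f : ℤ → M) :
    ∑ k ∈ Icc (-(ℓ : ℤ)) ℓ, f k = ∑ m ∈ range (2 * ℓ + 1), f (m - ℓ) := by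
  refine sum_nbij' (fun k => (k + ℓ).toNat) (fun m => m - ℓ) ?_ ?_ ?_ ?_ ?_ <;> intro a ha <;>
    simp only [mem_Icc, mem_range] at ha ⊢ <;>
    first | omega | (congr 1; omega)

section RootsOfUnity

variable {K : Type*} [Field K] {ℓ : ℕ} {ρ : K}

theorem IsPrimitiveRoot.sum_Icc_zpow_mul (hρ : IsPrimitiveRoot ρ (2 * ℓ + 1)) {d : ℤ}
    (hd : |d| ≤ 2 * ℓ) :
    ∑ k ∈ Icc (-(ℓ : ℤ)) ℓ, ρ ^ (k * d) = if d = 0 then (2 * ℓ + 1 : K) else 0 := by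
  split_ifs with hd0
  · have hcard : (ℓ + 1 + ℓ : ℤ).toNat = 2 * ℓ + 1 := by omega
    simp [hd0, Int.card_Icc, hcard]
  have hρ0 : ρ ≠ 0 := hρ.ne_zero (by omega)
  have hζ : ρ ^ d ≠ 1 := fun h =>
    hd0 (Int.eq_zero_of_abs_lt_dvd ((hρ.zpow_eq_one_iff_dvd d).1 h) (by push_cast; omega))
  have hζL : (ρ ^ d) ^ (2 * ℓ + 1) = 1 := by
    rw [← zpow_natCast, ← zpow_mul, mul_comm, zpow_mul, zpow_natCast, hρ.pow_eq_one, one_zpow]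
  calc ∑ k ∈ Icc (-(ℓ : ℤ)) ℓ, ρ ^ (k * d)
      = ∑ m ∈ range (2 * ℓ + 1), (ρ ^ d) ^ ((m : ℤ) - ℓ) := by
        rw [sum_Icc_neg_natCast_eq_sum_range]
        simp_rw [← zpow_mul, mul_comm]
    _ = (ρ ^ d) ^ (-(ℓ : ℤ)) * ∑ m ∈ range (2 * ℓ + 1), (ρ ^ d) ^ m := by
        rw [mul_sum]
        refine sum_congr rfl fun m _ => ?_
        rw [sub_eq_neg_add, zpow_add₀ (zpow_ne_zero _ hρ0), zpow_natCast]
    _ = 0 := by rw [geom_sum_eq hζ, hζL, sub_self, zero_div, mul_zero]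

theorem IsPrimitiveRoot.sum_Icc_mul_zpow_eq (hρ : IsPrimitiveRoot ρ (2 * ℓ + 1)) (c : ℤ → K)
    (w : K) :
    ∑ m ∈ Icc (-(ℓ : ℤ)) ℓ, c m * w ^ m =
      ∑ k ∈ Icc (-(ℓ : ℤ)) ℓ, (1 / (2 * ℓ + 1) * ∑ n ∈ Icc (-(ℓ : ℤ)) ℓ, ρ ^ (-(k * n)) * w ^ n) *
        ∑ m ∈ Icc (-(ℓ : ℤ)) ℓ, c m * (ρ ^ k) ^ m := by
  have hρ0 : ρ ≠ 0 := hρ.ne_zero (by omega)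
  have hL : (2 * ℓ + 1 : K) ≠ 0 := by
    have := hρ.neZero'
    exact_mod_cast NeZero.ne ((2 * ℓ + 1 : ℕ) : K)
  symm
  calc ∑ k ∈ Icc (-(ℓ : ℤ)) ℓ,
        (1 / (2 * ℓ + 1) * ∑ n ∈ Icc (-(ℓ : ℤ)) ℓ, ρ ^ (-(k * n)) * w ^ n) *
          ∑ m ∈ Icc (-(ℓ : ℤ)) ℓ, c m * (ρ ^ k) ^ m
      = ∑ k ∈ Icc (-(ℓ : ℤ)) ℓ, ∑ n ∈ Icc (-(ℓ : ℤ)) ℓ, ∑ m ∈ Icc (-(ℓ : ℤ)) ℓ,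
          1 / (2 * ℓ + 1) * w ^ n * c m * ρ ^ (k * (m - n)) := by
        simp_rw [mul_assoc (1 / _ : K), sum_mul_sum, mul_sum, ← zpow_mul]
        refine sum_congr rfl fun k _ => sum_congr rfl fun n _ => sum_congr rfl fun m _ => ?_
        rw [mul_sub, sub_eq_add_neg, zpow_add₀ hρ0]
        ring
    _ = ∑ n ∈ Icc (-(ℓ : ℤ)) ℓ, ∑ m ∈ Icc (-(ℓ : ℤ)) ℓ,
          1 / (2 * ℓ + 1) * w ^ n * c m * ∑ k ∈ Icc (-(ℓ : ℤ)) ℓ, ρ ^ (k * (m - n)) := by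
        rw [sum_comm]
        simp_rw [mul_sum]
        exact sum_congr rfl fun n _ => sum_comm
    _ = ∑ n ∈ Icc (-(ℓ : ℤ)) ℓ, c n * w ^ n := by
        refine sum_congr rfl fun n hn => ?_
        have hmn : ∀ m ∈ Icc (-(ℓ : ℤ)) ℓ, |m - n| ≤ 2 * ℓ := fun m hm => by
          rw [mem_Icc] at hm hn
          rw [abs_le]
          omega
        rw [sum_congr rfl fun m hm => congrArg _ (hρ.sum_Icc_zpow_mul (hmn m hm))]
        simp only [sub_eq_zero, mul_ite, mul_zero, sum_ite_eq', hn, if_true]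
        field_simp

theorem IsPrimitiveRoot.mul_sum_Icc_mul_div_zpow_eq (hρ : IsPrimitiveRoot ρ (2 * ℓ + 1))
    (c : ℤ → K) {A B : K} (hB : B ≠ 0) :
    B ^ ℓ * ∑ m ∈ Icc (-(ℓ : ℤ)) ℓ, c m * (A / B) ^ m =
      ∑ k ∈ Icc (-(ℓ : ℤ)) ℓ,
        (1 / (2 * ℓ + 1) * ∑ n ∈ Icc (-(ℓ : ℤ)) ℓ, ρ ^ (-(k * n)) * A ^ n * B ^ ((ℓ : ℤ) - n)) *
          ∑ m ∈ Icc (-(ℓ : ℤ)) ℓ, c m * (ρ ^ k) ^ m := by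
  have hhom : ∀ k : ℤ, B ^ ℓ * ∑ n ∈ Icc (-(ℓ : ℤ)) ℓ, ρ ^ (-(k * n)) * (A / B) ^ n =
      ∑ n ∈ Icc (-(ℓ : ℤ)) ℓ, ρ ^ (-(k * n)) * A ^ n * B ^ ((ℓ : ℤ) - n) := fun k => by
    rw [mul_sum]
    refine sum_congr rfl fun n _ => ?_
    rw [div_zpow, zpow_sub₀ hB, zpow_natCast]
    field_simp
  rw [hρ.sum_Icc_mul_zpow_eq, mul_sum]
  refine sum_congr rfl fun k _ => ?_
  rw [← hhom]
  ring

end RootsOfUnity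

theorem exists_sum_Icc_zpow_eq_pow {K : Type*} [Field K] (x a b : K) (ℓ : ℕ) :
    ∃ c : ℤ → K, ∀ w ≠ 0,
      (x + a * w + b * w⁻¹) ^ ℓ = ∑ m ∈ Icc (-(ℓ : ℤ)) ℓ, c m * w ^ m := by
  set p : K[X] := C b + C x * X + C a * X ^ 2
  refine ⟨fun m => (p ^ ℓ).coeff (m + ℓ).toNat, fun w hw => ?_⟩
  have hdeg : (p ^ ℓ).natDegree < 2 * ℓ + 1 := by
    have : p.natDegree ≤ 2 := by simp only [p]; compute_degree
    calc (p ^ ℓ).natDegree ≤ ℓ * p.natDegree := natDegree_pow_le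
      _ < 2 * ℓ + 1 := by nlinarith
  have hp : x + a * w + b * w⁻¹ = p.eval w / w := by
    simp only [p, eval_add, eval_mul, eval_pow, eval_C, eval_X]
    field_simp
    ring
  rw [hp, div_pow, ← eval_pow, eval_eq_sum_range' hdeg, sum_div, sum_Icc_neg_natCast_eq_sum_range]
  refine sum_congr rfl fun m _ => ?_
  simp [zpow_sub₀ hw, mul_div_assoc]

open Complex Matrix

theorem map_mul_transpose_map_eq_one {n R S : Type*} [Fintype n] [DecidableEq n] [CommRing R]
    [CommRing S] (f : R →+* S) {Q : Matrix n n R} (hQ : Q ∈ orthogonalGroup n R) :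
    Q.map f * (Q.map f)ᵀ = 1 := by
  rw [← transpose_map, ← Matrix.map_mul, (mem_orthogonalGroup_iff n R).1 hQ,
    Matrix.map_one f f.map_zero f.map_one]

theorem dotC_eq_dotProduct (W Z : Fin 3 → ℂ) : dotC W Z = W ⬝ᵥ Z := rfl

theorem dotC_mulVec (Q : Matrix (Fin 3) (Fin 3) ℂ) (Y Z : Fin 3 → ℂ) :
    dotC (Q *ᵥ Y) Z = dotC Y (Qᵀ *ᵥ Z) := by
  rw [dotC_eq_dotProduct, dotC_eq_dotProduct, dotProduct_comm, dotProduct_mulVec,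
    mulVec_transpose, dotProduct_comm]

theorem dotC_transpose_mulVec_self {Q : Matrix (Fin 3) (Fin 3) ℂ} (hQ : Q * Qᵀ = 1)
    (Z : Fin 3 → ℂ) : dotC (Qᵀ *ᵥ Z) (Qᵀ *ᵥ Z) = dotC Z Z := by
  rw [dotC_mulVec, transpose_transpose, mulVec_mulVec, hQ, one_mulVec]

theorem dotC_self_eq (M : Fin 3 → ℂ) :
    dotC M M = M 0 ^ 2 + (M 1 - I * M 2) * (M 1 + I * M 2) := by
  simp only [dotC, Fin.sum_univ_three]
  linear_combination (M 2) ^ 2 * I_sq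

theorem dotC_Nvec_self (θ : ℝ) : dotC (Nvec θ) (Nvec θ) = 0 := by
  simp only [dotC, Nvec, Fin.sum_univ_three, cons_val_zero, cons_val_one, cons_val_two,
    head_cons, tail_cons]
  have h : (Real.sin θ : ℂ) ^ 2 + (Real.cos θ : ℂ) ^ 2 = 1 := by
    exact_mod_cast congrArg ofReal (sin_sq_add_cos_sq θ)
  linear_combination ((Real.sin θ : ℂ) ^ 2 + (Real.cos θ : ℂ) ^ 2) * I_sq - h

noncomputable def nullVec (w : ℂ) : Fin 3 → ℂ :=
  ![1, (w - w⁻¹) / 2, I * (w + w⁻¹) / 2]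

theorem dotC_nullVec (Y : Fin 3 → ℂ) (w : ℂ) :
    dotC Y (nullVec w) = Y 0 + (Y 1 + I * Y 2) / 2 * w + (-Y 1 + I * Y 2) / 2 * w⁻¹ := by
  simp only [dotC, nullVec, Fin.sum_univ_three, cons_val_zero, cons_val_one, cons_val_two,
    head_cons, tail_cons]
  ring

theorem Nvec_eq_nullVec_exp (θ : ℝ) : Nvec θ = nullVec (exp (θ * I)) := by
  have hinv : (exp (θ * I))⁻¹ = Complex.cos θ - Complex.sin θ * I := by
    rw [← Complex.exp_neg, ← neg_mul, exp_mul_I, Complex.cos_neg, Complex.sin_neg, neg_mul,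
      sub_eq_add_neg]
  rw [nullVec, hinv, exp_mul_I]
  ext i
  fin_cases i <;> simp [Nvec] <;> ring

theorem sub_I_mul_ne_zero_of_dotC_self_eq_zero {M : Fin 3 → ℂ} (hM : dotC M M = 0)
    (h0 : M 0 ≠ 0) : M 1 - I * M 2 ≠ 0 := by
  intro hA
  rw [dotC_self_eq, hA, zero_mul, add_zero] at hM
  exact h0 (pow_eq_zero_iff two_ne_zero |>.1 hM)

theorem eq_smul_nullVec_of_dotC_self_eq_zero {M : Fin 3 → ℂ} (hM : dotC M M = 0)
    (h0 : M 0 ≠ 0) : M = M 0 • nullVec ((M 1 - I * M 2) / M 0) := by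
  have hA := sub_I_mul_ne_zero_of_dotC_self_eq_zero hM h0
  rw [dotC_self_eq] at hM
  ext i
  fin_cases i
  · simp [nullVec]
  · simp [nullVec]
    field_simp
    linear_combination hM
  · simp [nullVec]
    field_simp
    rw [mul_comm (M 2) I, eq_div_iff hA]
    linear_combination (-I) * hM + (2 * M 2 * M 1 - 2 * I * M 2 ^ 2) * I_sq

theorem dotC_pow_eq_sum_of_dotC_self_eq_zero (ℓ : ℕ) {M : Fin 3 → ℂ} (hM : dotC M M = 0)
    (h0 : M 0 ≠ 0) (Y : Fin 3 → ℂ) :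
    dotC Y M ^ ℓ = ∑ k ∈ Icc (-(ℓ : ℤ)) ℓ,
      (1 / (2 * ℓ + 1) * ∑ n ∈ Icc (-(ℓ : ℤ)) ℓ,
        exp (2 * π * I / (2 * ℓ + 1)) ^ (-(k * n)) * (M 1 - I * M 2) ^ n * M 0 ^ ((ℓ : ℤ) - n)) *
      dotC Y (Nvec (k * (2 * π / (2 * ℓ + 1)))) ^ ℓ := by
  set ρ := exp (2 * π * I / (2 * ℓ + 1))
  have hρ : IsPrimitiveRoot ρ (2 * ℓ + 1) := by
    simpa using isPrimitiveRoot_exp (2 * ℓ + 1) (by omega)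
  have hA := sub_I_mul_ne_zero_of_dotC_self_eq_zero hM h0
  obtain ⟨c, hc⟩ :=
    exists_sum_Icc_zpow_eq_pow (Y 0) ((Y 1 + I * Y 2) / 2) ((-Y 1 + I * Y 2) / 2) ℓ
  have hYM : dotC Y M = M 0 * dotC Y (nullVec ((M 1 - I * M 2) / M 0)) := by
    conv_lhs => rw [eq_smul_nullVec_of_dotC_self_eq_zero hM h0]
    exact dotProduct_smul _ _ _
  have hNk : ∀ k : ℤ, Nvec (k * (2 * π / (2 * ℓ + 1))) = nullVec (ρ ^ k) := fun k => by
    rw [Nvec_eq_nullVec_exp, ← exp_int_mul]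
    push_cast
    ring_nf
  rw [hYM, mul_pow, dotC_nullVec, hc _ (div_ne_zero hA h0), hρ.mul_sum_Icc_mul_div_zpow_eq c h0]
  refine sum_congr rfl fun k _ => ?_
  rw [hNk, dotC_nullVec, hc _ (zpow_ne_zero _ (hρ.ne_zero (by omega)))]

theorem group_action_Phi_general (ℓ : ℕ)
    (g : Matrix.specialOrthogonalGroup (Fin 3) ℝ)
    (j : ℤ)
    (hβ : dotC (((g : Matrix (Fin 3) (Fin 3) ℝ).map Complex.ofReal).mulVec ![1, 0, 0])
            (Nvec ((j : ℝ) * (2 * π / (2 * ℓ + 1)))) ≠ 0)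
    (X : Fin 3 → ℝ) :
    (dotC (fun i => (((g : Matrix (Fin 3) (Fin 3) ℝ).mulVec X) i : ℂ))
        (Nvec ((j : ℝ) * (2 * π / (2 * ℓ + 1))))) ^ ℓ
      = ∑ k ∈ Finset.Icc (-(ℓ : ℤ)) ℓ,
          ((1 / (2 * ℓ + 1) : ℂ) *
              ∑ n ∈ Finset.Icc (-(ℓ : ℤ)) ℓ,
                Complex.exp (2 * π * Complex.I / (2 * ℓ + 1)) ^ (-(k * n)) *
                  (dotC (((g : Matrix (Fin 3) (Fin 3) ℝ).map Complex.ofReal).mulVec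
                      ![0, 1, -Complex.I]) (Nvec ((j : ℝ) * (2 * π / (2 * ℓ + 1))))) ^ n *
                  (dotC (((g : Matrix (Fin 3) (Fin 3) ℝ).map Complex.ofReal).mulVec
                      ![1, 0, 0]) (Nvec ((j : ℝ) * (2 * π / (2 * ℓ + 1))))) ^ ((ℓ : ℤ) - n)) *
            (dotC (fun i => (X i : ℂ)) (Nvec ((k : ℝ) * (2 * π / (2 * ℓ + 1))))) ^ ℓ := by
  set gC := (g : Matrix (Fin 3) (Fin 3) ℝ).map ofReal
  set M := gCᵀ *ᵥ Nvec (j * (2 * π / (2 * ℓ + 1)))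
  have hM : dotC M M = 0 :=
    (dotC_transpose_mulVec_self (map_mul_transpose_map_eq_one ofRealHom g.2.1) _).trans
      (dotC_Nvec_self _)
  have hgX : (fun i => ((g *ᵥ X) i : ℂ)) = gC *ᵥ (fun i => (X i : ℂ)) :=
    funext (RingHom.map_mulVec ofRealHom _ X)
  have hβM : dotC (gC *ᵥ ![1, 0, 0]) (Nvec (j * (2 * π / (2 * ℓ + 1)))) = M 0 := by
    rw [dotC_mulVec]
    simp [dotC, M, Fin.sum_univ_three]
  have hαM : dotC (gC *ᵥ ![0, 1, -I]) (Nvec (j * (2 * π / (2 * ℓ + 1)))) = M 1 - I * M 2 := by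
    rw [dotC_mulVec]
    simp [dotC, M, Fin.sum_univ_three]
    ring
  rw [hgX, dotC_mulVec, hβM, hαM]
  rw [hβM] at hβ
  exact dotC_pow_eq_sum_of_dotC_self_eq_zero ℓ hM hβ _

/-- Transformation of the basis functions `Φ_j = (· ⋅ N_j)^ℓ` under an arbitrary
rotation `g ∈ SO(3)`: `Φ_j ∘ g = Σ_k G_j^k Φ_k` with the explicit coefficients
`G_j^k = (1/(2ℓ+1)) Σ_n ρ^{-kn} ((gα)⋅N_j)^n ((gβ)⋅N_j)^{ℓ-n}`,
where `α = (0,1,-i)`, `β = (1,0,0)` and `ρ = e^{2πi/(2ℓ+1)}`. -/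
theorem group_action_Phi (ℓ : ℕ) (hℓ : 1 ≤ ℓ)
    (g : Matrix.specialOrthogonalGroup (Fin 3) ℝ)
    (j : ℤ) (hj : j ∈ Finset.Icc (-(ℓ : ℤ)) ℓ)
    (hβ : dotC (((g : Matrix (Fin 3) (Fin 3) ℝ).map Complex.ofReal).mulVec ![1, 0, 0])
            (Nvec ((j : ℝ) * (2 * π / (2 * ℓ + 1)))) ≠ 0)
    (X : Fin 3 → ℝ) :
    (dotC (fun i => (((g : Matrix (Fin 3) (Fin 3) ℝ).mulVec X) i : ℂ))
        (Nvec ((j : ℝ) * (2 * π / (2 * ℓ + 1))))) ^ ℓ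
      = ∑ k ∈ Finset.Icc (-(ℓ : ℤ)) ℓ,
          ((1 / (2 * ℓ + 1) : ℂ) *
              ∑ n ∈ Finset.Icc (-(ℓ : ℤ)) ℓ,
                Complex.exp (2 * π * Complex.I / (2 * ℓ + 1)) ^ (-(k * n)) *
                  (dotC (((g : Matrix (Fin 3) (Fin 3) ℝ).map Complex.ofReal).mulVec
                      ![0, 1, -Complex.I]) (Nvec ((j : ℝ) * (2 * π / (2 * ℓ + 1))))) ^ n *
                  (dotC (((g : Matrix (Fin 3) (Fin 3) ℝ).map Complex.ofReal).mulVec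
                      ![1, 0, 0]) (Nvec ((j : ℝ) * (2 * π / (2 * ℓ + 1))))) ^ ((ℓ : ℤ) - n)) *
            (dotC (fun i => (X i : ℂ)) (Nvec ((k : ℝ) * (2 * π / (2 * ℓ + 1))))) ^ ℓ :=
  group_action_Phi_general ℓ g j hβ X
end

section
/- Let ℓ ≥ 1 be an integer, a = 2π/(2ℓ+1), ρ = exp(2πi/(2ℓ+1)), and let ψ ∈ ℝ. Let g_ψ be the rotation matrix with rows (1,0,0), (0,cos ψ,-sin ψ), (0,sin ψ,cos ψ). Then for every integer j with -ℓ ≤ j ≤ ℓ and every X ∈ ℝ³: ((g_ψ X)·N_j)^ℓ = Σ_{k=-ℓ}^{ℓ} [ (1/(2ℓ+1))·Σ_{n=-ℓ}^{ℓ} e^{i n ψ}·ρ^{n(j-k)} ] · (X·N_k)^ℓ. -/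
/-!
With `z = e^{iα}` one has `X·N(α) = z⁻¹ q_X(z)` for a quadratic polynomial `q_X`, so
`(X·N(α))^ℓ = z^{-ℓ} q_X(z)^ℓ` is a Laurent polynomial in `z` supported on exponents in
`[-ℓ, ℓ]`. The rotation `g_ψ` turns `α` into `α + ψ`, i.e. `z` into `e^{iψ} z`. A Laurent
polynomial with these `2ℓ + 1` exponents is recovered from its values at the `(2ℓ+1)`-th roots of
unity `ρ^k` by discrete Fourier inversion, which rests on the orthogonality
`Σ_k ρ^{(m-n)k} = (2ℓ+1) δ_{mn}`; evaluating the inversion formula at `z = e^{iψ} ρ^j` gives the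
theorem.
-/

open Real

/-- The rotation of angle `ψ` about the first axis. -/
noncomputable def rotX (ψ : ℝ) : Matrix (Fin 3) (Fin 3) ℝ :=
  !![1, 0, 0; 0, Real.cos ψ, -Real.sin ψ; 0, Real.sin ψ, Real.cos ψ]

open Finset Polynomial

theorem sum_Icc_neg_eq_sum_range {M : Type*} [AddCommMonoid M] (ℓ : ℕ) (f : ℤ → M) :
    ∑ k ∈ Icc (-(ℓ : ℤ)) ℓ, f k = ∑ t ∈ range (2 * ℓ + 1), f (t - ℓ) := by
  refine sum_nbij' (fun k => (k + ℓ).toNat) (fun t => (t : ℤ) - ℓ) ?_ ?_ ?_ ?_ fun k hk => ?_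
  iterate 4 intro x hx; simp only [mem_Icc, mem_range] at hx ⊢; omega
  rw [mem_Icc] at hk
  congr 1
  omega

section Field

variable {K : Type*} [Field K]

noncomputable def laurentSum (ℓ : ℕ) (b : ℤ → K) (z : K) : K :=
  ∑ n ∈ Icc (-(ℓ : ℤ)) ℓ, b n * z ^ n

theorem sum_Icc_zpow_eq_zero {x : K} {ℓ : ℕ} (hx : x ^ (2 * ℓ + 1) = 1) (hx1 : x ≠ 1) :
    ∑ k ∈ Icc (-(ℓ : ℤ)) ℓ, x ^ k = 0 := by
  have hx0 : x ≠ 0 := by rintro rfl; simp at hx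
  rw [sum_Icc_neg_eq_sum_range]
  simp_rw [zpow_sub₀ hx0, zpow_natCast, div_eq_mul_inv, ← sum_mul, geom_sum_eq hx1, hx]
  simp

theorem Polynomial.inv_pow_mul_eval_eq_laurentSum {P : K[X]} {ℓ : ℕ}
    (hP : P.natDegree ≤ 2 * ℓ) {z : K} (hz : z ≠ 0) :
    (z ^ ℓ)⁻¹ * P.eval z = laurentSum ℓ (fun n => P.coeff (n + ℓ).toNat) z := by
  rw [laurentSum, eval_eq_sum_range' (by omega : P.natDegree < 2 * ℓ + 1),
    sum_Icc_neg_eq_sum_range, mul_sum]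
  refine sum_congr rfl fun t _ => ?_
  rw [sub_add_cancel, Int.toNat_natCast, zpow_sub₀ hz, zpow_natCast, zpow_natCast]
  ring

theorem IsPrimitiveRoot.sum_Icc_zpow_mul_zpow_neg {ρ : K} {ℓ : ℕ}
    (hρ : IsPrimitiveRoot ρ (2 * ℓ + 1)) {m n : ℤ} (hm : m ∈ Icc (-(ℓ : ℤ)) ℓ)
    (hn : n ∈ Icc (-(ℓ : ℤ)) ℓ) :
    ∑ k ∈ Icc (-(ℓ : ℤ)) ℓ, (ρ ^ k) ^ m * ρ ^ (-(n * k)) =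
      if m = n then (2 * ℓ + 1 : K) else 0 := by
  have hsummand (k : ℤ) : (ρ ^ k) ^ m * ρ ^ (-(n * k)) = (ρ ^ (m - n)) ^ k := by
    rw [← zpow_mul, ← zpow_add₀ (hρ.ne_zero (by omega)), ← zpow_mul]
    ring_nf
  simp_rw [hsummand]
  split_ifs with hmn
  · rw [hmn, sub_self, zpow_zero, sum_congr rfl fun k _ => one_zpow k, sum_const, Int.card_Icc,
      show ((ℓ : ℤ) + 1 - -ℓ).toNat = 2 * ℓ + 1 by omega, nsmul_one]
    push_cast
    rfl
  · rw [mem_Icc] at hm hn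
    apply sum_Icc_zpow_eq_zero
    · rw [← zpow_natCast, ← zpow_mul, mul_comm, zpow_mul, zpow_natCast, hρ.pow_eq_one, one_zpow]
    · rw [Ne, hρ.zpow_eq_one_iff_dvd]
      exact fun hdvd => hmn (sub_eq_zero.mp (Int.eq_zero_of_abs_lt_dvd hdvd
        (abs_lt.mpr ⟨by push_cast; omega, by push_cast; omega⟩)))

theorem IsPrimitiveRoot.laurentSum_interpolation {ρ : K} {ℓ : ℕ}
    (hρ : IsPrimitiveRoot ρ (2 * ℓ + 1)) (b : ℤ → K) (z : K) :
    laurentSum ℓ b z = ∑ k ∈ Icc (-(ℓ : ℤ)) ℓ,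
      ((1 / (2 * ℓ + 1)) * ∑ n ∈ Icc (-(ℓ : ℤ)) ℓ, z ^ n * ρ ^ (-(n * k))) *
        laurentSum ℓ b (ρ ^ k) := by
  have hN : (2 * ℓ + 1 : K) ≠ 0 := by exact_mod_cast hρ.neZero'.out
  symm
  calc _ = ∑ m ∈ Icc (-(ℓ : ℤ)) ℓ, ∑ n ∈ Icc (-(ℓ : ℤ)) ℓ, 1 / (2 * ℓ + 1) * z ^ n * b m *
        ∑ k ∈ Icc (-(ℓ : ℤ)) ℓ, (ρ ^ k) ^ m * ρ ^ (-(n * k)) := by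
        simp only [laurentSum, mul_sum, sum_mul]
        rw [sum_comm]
        refine sum_congr rfl fun m _ => ?_
        rw [sum_comm]
        refine sum_congr rfl fun n _ => sum_congr rfl fun k _ => ?_
        ring
    _ = laurentSum ℓ b z := by
        refine sum_congr rfl fun m hm => ?_
        rw [sum_congr rfl fun n hn => by rw [hρ.sum_Icc_zpow_mul_zpow_neg hm hn]]
        simp only [mul_ite, mul_zero, sum_ite_eq, hm, if_true]
        field_simp

end Field

open Complex (I)
open scoped Complex

theorem dotRC_rotX_mulVec (ψ α : ℝ) (X : Fin 3 → ℝ) :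
    dotRC ((rotX ψ).mulVec X) (Nvec α) = dotRC X (Nvec (α + ψ)) := by
  simp only [dotRC, Matrix.mulVec, dotProduct, rotX, Matrix.of_apply, Matrix.cons_val',
    Matrix.cons_val_fin_one, Fin.sum_univ_three, Matrix.cons_val_zero, Matrix.cons_val_one,
    Matrix.cons_val, Nvec, Real.sin_add, Real.cos_add]
  push_cast
  ring

noncomputable def pairingPoly (X : Fin 3 → ℝ) : ℂ[X] :=
  C ((X 2 * I - X 1) / 2) + C (X 0 : ℂ) * Polynomial.X + C ((X 1 + X 2 * I) / 2) * Polynomial.X ^ 2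

theorem natDegree_pairingPoly_le (X : Fin 3 → ℝ) : (pairingPoly X).natDegree ≤ 2 := by
  unfold pairingPoly
  compute_degree

theorem dotRC_Nvec_eq_inv_mul_eval (X : Fin 3 → ℝ) (α : ℝ) :
    dotRC X (Nvec α) = (cexp (α * I))⁻¹ * (pairingPoly X).eval (cexp (α * I)) := by
  have hsin : (Real.sin α : ℂ) = (cexp (α * I) - (cexp (α * I))⁻¹) / (2 * I) := by
    rw [← Complex.exp_neg, Complex.ofReal_sin, Complex.sin, neg_mul]
    field_simp
    linear_combination (cexp (-(α * I)) - cexp (α * I)) * Complex.I_sq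
  have hcos : (Real.cos α : ℂ) = (cexp (α * I) + (cexp (α * I))⁻¹) / 2 := by
    rw [← Complex.exp_neg, Complex.ofReal_cos, Complex.cos, neg_mul]
  simp only [dotRC, Nvec, Fin.sum_univ_three, Matrix.cons_val_zero, Matrix.cons_val_one,
    Matrix.cons_val_two, Matrix.head_cons, Matrix.tail_cons, hsin, hcos, pairingPoly, eval_add,
    eval_mul, eval_C, eval_X, eval_pow]
  field_simp
  ring

theorem dotRC_Nvec_pow_eq_laurentSum (X : Fin 3 → ℝ) (ℓ : ℕ) (α : ℝ) :
    dotRC X (Nvec α) ^ ℓ =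
      laurentSum ℓ (fun n => ((pairingPoly X) ^ ℓ).coeff (n + ℓ).toNat) (cexp (α * I)) := by
  rw [dotRC_Nvec_eq_inv_mul_eval, mul_pow, ← eval_pow, inv_pow]
  exact inv_pow_mul_eval_eq_laurentSum
    ((natDegree_pow_le_of_le ℓ (natDegree_pairingPoly_le X)).trans_eq (mul_comm _ _))
    (Complex.exp_ne_zero _)

theorem cexp_mul_two_pi_div_eq_zpow (ℓ : ℕ) (k : ℤ) :
    cexp (((k * (2 * π / (2 * ℓ + 1)) : ℝ) : ℂ) * I) = cexp (2 * π * I / (2 * ℓ + 1)) ^ k := by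
  rw [← Complex.exp_int_mul]
  congr 1
  push_cast
  ring

theorem so2_action_Phi_general (ℓ : ℕ) (ψ : ℝ)
    (j : ℤ) (X : Fin 3 → ℝ) :
    (dotRC ((rotX ψ).mulVec X) (Nvec ((j : ℝ) * (2 * π / (2 * ℓ + 1))))) ^ ℓ
      = ∑ k ∈ Finset.Icc (-(ℓ : ℤ)) ℓ,
          ((1 / (2 * ℓ + 1) : ℂ) *
              ∑ n ∈ Finset.Icc (-(ℓ : ℤ)) ℓ,
                Complex.exp (Complex.I * n * ψ) *
                  Complex.exp (2 * π * Complex.I / (2 * ℓ + 1)) ^ (n * (j - k))) *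
            (dotRC X (Nvec ((k : ℝ) * (2 * π / (2 * ℓ + 1))))) ^ ℓ := by
  have hρ : IsPrimitiveRoot (cexp (2 * π * I / (2 * ℓ + 1))) (2 * ℓ + 1) := by
    simpa using Complex.isPrimitiveRoot_exp (2 * ℓ + 1) (by omega)
  rw [dotRC_rotX_mulVec, dotRC_Nvec_pow_eq_laurentSum, hρ.laurentSum_interpolation]
  refine sum_congr rfl fun k _ => ?_
  rw [dotRC_Nvec_pow_eq_laurentSum, cexp_mul_two_pi_div_eq_zpow]
  congr 2
  refine sum_congr rfl fun n _ => ?_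
  rw [Complex.ofReal_add, add_mul, Complex.exp_add, cexp_mul_two_pi_div_eq_zpow, mul_zpow,
    ← zpow_mul, ← Complex.exp_int_mul (ψ * I) n, mul_sub, sub_eq_add_neg,
    zpow_add₀ (hρ.ne_zero (by omega)), mul_comm j n, show (n : ℂ) * (ψ * I) = I * n * ψ by ring]
  ring

/-- Transformation of the basis functions `Φ_j = (· ⋅ N_j)^ℓ` under the rotation
`g_ψ` about the first axis: `Φ_j ∘ g_ψ = Σ_k [(1/(2ℓ+1)) Σ_n e^{inψ} ρ^{n(j-k)}] Φ_k`,
with `ρ = e^{2πi/(2ℓ+1)}`. -/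
theorem so2_action_Phi (ℓ : ℕ) (hℓ : 1 ≤ ℓ) (ψ : ℝ)
    (j : ℤ) (hj : j ∈ Finset.Icc (-(ℓ : ℤ)) ℓ) (X : Fin 3 → ℝ) :
    (dotRC ((rotX ψ).mulVec X) (Nvec ((j : ℝ) * (2 * π / (2 * ℓ + 1))))) ^ ℓ
      = ∑ k ∈ Finset.Icc (-(ℓ : ℤ)) ℓ,
          ((1 / (2 * ℓ + 1) : ℂ) *
              ∑ n ∈ Finset.Icc (-(ℓ : ℤ)) ℓ,
                Complex.exp (Complex.I * n * ψ) *
                  Complex.exp (2 * π * Complex.I / (2 * ℓ + 1)) ^ (n * (j - k))) *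
            (dotRC X (Nvec ((k : ℝ) * (2 * π / (2 * ℓ + 1))))) ^ ℓ :=
  so2_action_Phi_general ℓ ψ j X
end

section
/- Let ℓ ≥ 1 be an integer, a = 2π/(2ℓ+1), and let K ∈ ℤ. Let g be the rotation matrix with rows (1,0,0), (0,cos(K·a),-sin(K·a)), (0,sin(K·a),cos(K·a)), i.e. rotation by the angle K·a = 2πK/(2ℓ+1) about the first axis. Then for every j ∈ ℤ and every X ∈ ℝ³: ((gX)·N_j)^ℓ = (X·N_{j+K})^ℓ. In other words, when the rotation angle is a (2ℓ+1)-th root-of-unity angle, the transformation matrix of the basis (Φ_j) is a permutation: T_g Φ_j = Φ_{j+K} (indices modulo 2ℓ+1). -/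
open Real

/-- When the rotation angle is the root-of-unity angle `K·a`, `a = 2π/(2ℓ+1)`, the
rotation acts on the basis `(Φ_j)` as a permutation: `Φ_j ∘ g = Φ_{j+K}`. -/
theorem rootOfUnity_rotation_permutes_Phi (ℓ : ℕ) (hℓ : 1 ≤ ℓ) (K : ℤ)
    (j : ℤ) (X : Fin 3 → ℝ) :
    (dotRC ((rotX ((K : ℝ) * (2 * π / (2 * ℓ + 1)))).mulVec X)
        (Nvec ((j : ℝ) * (2 * π / (2 * ℓ + 1))))) ^ ℓ
      = (dotRC X (Nvec (((j + K : ℤ) : ℝ) * (2 * π / (2 * ℓ + 1))))) ^ ℓ := by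
  congr 1
  have h : ((j + K : ℤ) : ℝ) * (2 * π / (2 * ℓ + 1))
      = (j : ℝ) * (2 * π / (2 * ℓ + 1)) + (K : ℝ) * (2 * π / (2 * ℓ + 1)) := by
    push_cast; ring
  rw [h]
  simp only [dotRC, rotX, Nvec, Matrix.mulVec, Fin.sum_univ_three, Matrix.cons_val_zero,
    Matrix.cons_val_one, Matrix.head_cons, Matrix.cons_val_two, Matrix.tail_cons,
    Matrix.of_apply, dotProduct, Real.sin_add, Real.cos_add, Complex.ofReal_sin, Complex.ofReal_cos]
  push_cast
  ring
end
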